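/- arXiv:1205.1587 — 12 statements merged into one kernel-verified Lean document; each statement's English description precedes it below -/
import Mathlib

section
/- Let m ≥ 1 and let f : 2^[m] → ℝ be any set function with f(∅) = 0. Define w_f by the W-transform of f. Then f is recovered from its W-coefficients: for every T ⊆ [m], f(T) = Σ_{S nonempty, S ∩ T ≠ ∅} w_f(S). -/
open Finset

/-- The W-transform: `Wcoef m f S = Σ_{T : S ∪ T = [m]} (−1)^{|S ∩ T| + 1} f(T)`. -/
noncomputable def Wcoef (m : ℕ) (f : Finset (Fin m) → ℝ) (S : Finset (Fin m)) : ℝ :=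
  ∑ T ∈ univ.filter (fun T : Finset (Fin m) => S ∪ T = univ),
    (-1 : ℝ) ^ ((S ∩ T).card + 1) * f T

/-!
Swapping the two sums, `Σ_{S ∩ T ≠ ∅} w_f(S) = Σ_{T'} K(T, T') f(T')` with
`K(T, T') = Σ (−1)^{|S ∩ T'| + 1}` over the `S ⊇ T'ᶜ` meeting `T`. The `S ⊇ T'ᶜ` form the
interval `[T'ᶜ, univ]` of the Boolean lattice and those also avoiding `T` the interval
`[T'ᶜ, Tᶜ]`; since `Σ_{S ∈ [A, C]} (−1)^{|S \ A|} = [A = C]`, this gives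
`K(T, T') = [T' = T] − [T' = ∅]`, and `f(∅) = 0` kills the second term.
-/

variable {α R : Type*} [DecidableEq α] [Ring R]

theorem Finset.sum_Icc_neg_one_pow_card_sdiff (A C : Finset α) :
    ∑ S ∈ Icc A C, (-1 : R) ^ #(S \ A) = if A = C then 1 else 0 := by
  by_cases hAC : A ⊆ C
  · have hpow : ∑ B ∈ (C \ A).powerset, (-1 : R) ^ #B = if C \ A = ∅ then 1 else 0 := by
      have := congrArg (Int.cast : ℤ → R) (sum_powerset_neg_one_pow_card (x := C \ A))
      push_cast at this
      exact this
    have hdisj : ∀ B ∈ (C \ A).powerset, Disjoint A B := fun B hB =>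
      disjoint_of_subset_right (mem_powerset.mp hB) disjoint_sdiff
    rw [Icc_eq_image_powerset hAC, sum_image fun B hB B' hB' h => by
      rw [← union_sdiff_cancel_left (hdisj B hB), ← union_sdiff_cancel_left (hdisj B' hB')]
      exact congrArg (· \ A) h]
    rw [sum_congr rfl fun B hB => by rw [union_sdiff_cancel_left (hdisj B hB)], hpow]
    have hCA : C \ A = ∅ ↔ A = C := by
      rw [sdiff_eq_empty_iff_subset]
      exact ⟨fun h => subset_antisymm hAC h, fun h => h.symm.subset⟩
    simp only [hCA]
  · rw [Icc_eq_empty hAC, sum_empty, if_neg fun h : A = C => hAC h.subset]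

theorem Finset.sum_filter_inter_nonempty_union_eq_univ [Fintype α] (T T' : Finset α) :
    ∑ S ∈ univ.filter (fun S => (S ∩ T).Nonempty ∧ S ∪ T' = univ),
      (-1 : R) ^ (#(S ∩ T') + 1)
      = (if T' = T then 1 else 0) - (if T' = ∅ then 1 else 0) := by
  have hcover : univ.filter (fun S => (S ∩ T).Nonempty ∧ S ∪ T' = univ)
      = (Icc T'ᶜ univ).filter (fun S => (S ∩ T).Nonempty) := by
    ext S
    simp [eq_univ_iff_forall, subset_iff, or_iff_not_imp_right, and_comm]
  have hmiss : (Icc T'ᶜ univ).filter (fun S => ¬(S ∩ T).Nonempty) = Icc T'ᶜ Tᶜ := by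
    ext S
    simp [subset_compl_iff_disjoint_right, disjoint_iff_inter_eq_empty]
  have hsplit := sum_filter_add_sum_filter_not (Icc T'ᶜ univ) (fun S => (S ∩ T).Nonempty)
    (fun S => (-1 : R) ^ #(S \ T'ᶜ))
  simp only [hmiss, sum_Icc_neg_one_pow_card_sdiff, compl_eq_univ_iff, compl_inj_iff] at hsplit
  have hinter (S : Finset α) : S ∩ T' = S \ T'ᶜ := by rw [sdiff_compl, inf_eq_inter]
  rw [hcover]
  simp only [hinter, pow_succ, ← sum_mul]
  rw [eq_sub_of_add_eq hsplit]
  noncomm_ring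

theorem stmt0_general (m : ℕ) (f : Finset (Fin m) → ℝ) (hf : f ∅ = 0)
    (T : Finset (Fin m)) :
    f T = ∑ S ∈ univ.filter (fun S : Finset (Fin m) => S.Nonempty ∧ (S ∩ T).Nonempty),
      Wcoef m f S := by
  unfold Wcoef
  rw [sum_comm' (t' := univ)
    (s' := fun T' => univ.filter (fun S => (S ∩ T).Nonempty ∧ S ∪ T' = univ))
    fun S T' => by
      simp only [mem_filter, mem_univ, and_true, true_and,
        and_iff_right_of_imp (Nonempty.mono inter_subset_left)]]
  simp only [← sum_mul, sum_filter_inter_nonempty_union_eq_univ, sub_mul, sum_sub_distrib, ite_mul,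
    one_mul, zero_mul, sum_ite_eq', mem_univ, if_true, hf, sub_zero]

theorem stmt0 (m : ℕ) (hm : 1 ≤ m) (f : Finset (Fin m) → ℝ) (hf : f ∅ = 0)
    (T : Finset (Fin m)) :
    f T = ∑ S ∈ univ.filter (fun S : Finset (Fin m) => S.Nonempty ∧ (S ∩ T).Nonempty),
      Wcoef m f S :=
  stmt0_general m f hf T
end

section
/- Let m ≥ 1 and let w be any real-valued function on the nonempty subsets of [m]. Define f : 2^[m] → ℝ by f(T) = Σ_{S nonempty, S ∩ T ≠ ∅} w(S). Then the W-transform of f equals w: for every nonempty S ⊆ [m], Σ_{T ⊆ [m] : S ∪ T = [m]} (−1)^{|S ∩ T| + 1} f(T) = w(S). In particular, two different weight functions on nonempty subsets induce different set functions. -/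
/-!
Expanding `f` and exchanging the two sums, the W-coefficient at `S` becomes `Σ_A w(A) c(A, S)`
with `c(A, S) = Σ_{T ⊇ Sᶜ} (−1)^{|S ∩ T| + 1} [A ∩ T ≠ ∅]`. Writing `T = Sᶜ ∪ U` with `U ⊆ S`
and `[A ∩ T ≠ ∅] = 1 − [A ∩ T = ∅]`, the constant part is an alternating sum over the subsets
of `S ≠ ∅`, hence vanishes; and `A ∩ T = ∅` forces `A ⊆ S` and `U ⊆ S \ A`, leaving the
alternating sum over the subsets of `S \ A`, which is `1` exactly when `A = S`.
-/

open Finset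

/-- The set function induced by a weight function on the nonempty subsets of `[m]`:
`f(T) = Σ_{S nonempty, S ∩ T ≠ ∅} w(S)`. -/
noncomputable def inducedF (m : ℕ) (w : Finset (Fin m) → ℝ) (T : Finset (Fin m)) : ℝ :=
  ∑ S ∈ univ.filter (fun S : Finset (Fin m) => S.Nonempty ∧ (S ∩ T).Nonempty), w S

namespace Finset

variable {α R : Type*} [DecidableEq α] [Ring R]

theorem sum_powerset_neg_one_pow_card' (x : Finset α) :
    ∑ U ∈ x.powerset, (-1 : R) ^ U.card = if x = ∅ then 1 else 0 := by
  have := congrArg (Int.cast : ℤ → R) (sum_powerset_neg_one_pow_card (x := x))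
  push_cast at this
  simpa [apply_ite (Int.cast : ℤ → R)] using this

variable [Fintype α]

theorem sum_union_eq_univ_eq_sum_powerset {β : Type*} [AddCommMonoid β] (S : Finset α)
    (g : Finset α → β) :
    ∑ T ∈ univ.filter (fun T => S ∪ T = univ), g T = ∑ U ∈ S.powerset, g (Sᶜ ∪ U) := by
  have hcompl_union : ∀ T ∈ univ.filter (fun T => S ∪ T = univ), Sᶜ ∪ S ∩ T = T := by
    intro T hT
    ext a
    have := congrArg (a ∈ ·) (mem_filter.1 hT).2
    simp at this ⊢
    tauto
  refine sum_nbij' (S ∩ ·) (Sᶜ ∪ ·) ?_ ?_ hcompl_union ?_ fun T hT => by rw [hcompl_union T hT]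
  all_goals
    simp +contextual only [mem_filter, mem_univ, true_and, mem_powerset, Finset.ext_iff,
      subset_iff, mem_inter, mem_union, mem_compl, implies_true]
  all_goals grind

theorem sum_powerset_filter_disjoint_compl_union (S A : Finset α) :
    ∑ U ∈ S.powerset with Disjoint A (Sᶜ ∪ U), (-1 : R) ^ U.card = if A = S then 1 else 0 := by
  by_cases hAS : A ⊆ S
  · have hfilter : S.powerset.filter (fun U => Disjoint A (Sᶜ ∪ U)) = (S \ A).powerset := by
      ext U
      simp [disjoint_union_right, disjoint_compl_right_iff, hAS, subset_sdiff, disjoint_comm]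
    rw [hfilter, sum_powerset_neg_one_pow_card']
    exact if_congr (sdiff_eq_empty_iff_subset.trans ⟨hAS.antisymm, fun h => h.ge⟩) rfl rfl
  · have hfilter : S.powerset.filter (fun U => Disjoint A (Sᶜ ∪ U)) = ∅ := by
      ext U
      simp [disjoint_union_right, disjoint_compl_right_iff, hAS]
    rw [hfilter, sum_empty, if_neg (fun h => hAS h.le)]

theorem sum_union_eq_univ_neg_one_pow_mul_nonempty_inter {S : Finset α} (hS : S.Nonempty)
    (A : Finset α) :
    ∑ T ∈ univ.filter (fun T => S ∪ T = univ),
      (-1 : R) ^ ((S ∩ T).card + 1) * (if (A ∩ T).Nonempty then 1 else 0) =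
      if A = S then 1 else 0 := by
  rw [sum_union_eq_univ_eq_sum_powerset]
  have hterm : ∀ U ∈ S.powerset,
      (-1 : R) ^ ((S ∩ (Sᶜ ∪ U)).card + 1) * (if (A ∩ (Sᶜ ∪ U)).Nonempty then 1 else 0) =
        -(-1 : R) ^ U.card + if Disjoint A (Sᶜ ∪ U) then (-1 : R) ^ U.card else 0 := by
    intro U hU
    rw [inter_union_distrib_left, inter_compl, empty_union, inter_eq_right.2 (mem_powerset.1 hU)]
    by_cases h : Disjoint A (Sᶜ ∪ U)
    · simp [h, disjoint_iff_inter_eq_empty.1 h, pow_succ]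
    · simp [h, not_disjoint_iff_nonempty_inter.1 h, pow_succ]
  rw [sum_congr rfl hterm, sum_add_distrib, sum_neg_distrib, ← sum_filter,
    sum_powerset_neg_one_pow_card', if_neg hS.ne_empty, neg_zero, zero_add,
    sum_powerset_filter_disjoint_compl_union]

end Finset

theorem inducedF_eq_sum_mul_boole (m : ℕ) (w : Finset (Fin m) → ℝ) (T : Finset (Fin m)) :
    inducedF m w T = ∑ A ∈ univ.filter Finset.Nonempty,
      w A * if (A ∩ T).Nonempty then 1 else 0 := by
  simp only [inducedF, ← filter_filter, sum_filter, mul_boole]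

theorem Wcoef_inducedF (m : ℕ) (w : Finset (Fin m) → ℝ) {S : Finset (Fin m)} (hS : S.Nonempty) :
    Wcoef m (inducedF m w) S = w S := by
  simp only [Wcoef, inducedF_eq_sum_mul_boole, mul_sum]
  rw [sum_comm]
  simp only [mul_left_comm _ (w _), ← mul_sum,
    sum_union_eq_univ_neg_one_pow_mul_nonempty_inter hS]
  simp [hS]

theorem stmt1_general (m : ℕ) (w w' : Finset (Fin m) → ℝ) :
    (∀ S : Finset (Fin m), S.Nonempty → Wcoef m (inducedF m w) S = w S) ∧
    ((∃ S : Finset (Fin m), S.Nonempty ∧ w S ≠ w' S) → inducedF m w ≠ inducedF m w') := by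
  refine ⟨fun S hS => Wcoef_inducedF m w hS, ?_⟩
  rintro ⟨S, hS, hne⟩ heq
  exact hne (by rw [← Wcoef_inducedF m w hS, ← Wcoef_inducedF m w' hS, heq])

theorem stmt1 (m : ℕ) (hm : 1 ≤ m) (w w' : Finset (Fin m) → ℝ) :
    (∀ S : Finset (Fin m), S.Nonempty → Wcoef m (inducedF m w) S = w S) ∧
    ((∃ S : Finset (Fin m), S.Nonempty ∧ w S ≠ w' S) → inducedF m w ≠ inducedF m w') :=
  stmt1_general m w w'
end

section
/- Let m ≥ 1 and let f : 2^[m] → ℝ be a set function with f(∅) = 0. Then f is a coverage function if and only if all of its W-coefficients are nonnegative, i.e., w_f(S) ≥ 0 for every nonempty S ⊆ [m]. -/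
/-!
A coverage function is a nonnegative combination of the elementary functions
`hits B T = [T ∩ B ≠ ∅]`, one for each element `u` of the universe, with `B = {i | u ∈ A_i}`.
The W-transform is linear and sends `hits B` to `[S = B] - [S = ∅]`, so at a nonempty `S` the
W-coefficient of a coverage function is the total weight of the elements `u` with `B = S`.

Conversely, the kernel `[S ∪ T = univ] (-1)^(|S ∩ T| + 1)` of the W-transform is symmetric, hence
`∑_{S ∩ T ≠ ∅} w_f(S) = ∑_R f(R) w_{hits T}(R) = f(T) - f(∅)`: a normalized `f` is the coverage
function with one element of weight `w_f(S)` for each nonempty `S`, lying in `A_i` iff `i ∈ S`.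
-/

open Finset

/-- `f` is a coverage function: there is a finite universe `U`, sets `A_1, …, A_m ⊆ U` and
nonnegative weights on `U` so that `f(T)` is the total weight of `∪_{i ∈ T} A_i`. -/
def IsCoverage (m : ℕ) (f : Finset (Fin m) → ℝ) : Prop :=
  ∃ (U : Type) (_ : Fintype U) (_ : DecidableEq U) (A : Fin m → Finset U) (wt : U → ℝ),
    (∀ u, 0 ≤ wt u) ∧ ∀ T : Finset (Fin m), f T = ∑ u ∈ T.biUnion A, wt u

lemma sum_powerset_neg_one_pow_card_eq_ite {R α : Type*} [Ring R] [DecidableEq α]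
    (s : Finset α) : ∑ X ∈ s.powerset, (-1 : R) ^ #X = if s = ∅ then 1 else 0 := by
  have := congrArg (Int.cast : ℤ → R) (sum_powerset_neg_one_pow_card (x := s))
  push_cast at this
  simpa [apply_ite] using this

namespace SetFunction

variable {α : Type*} [DecidableEq α]

noncomputable def hits (B T : Finset α) : ℝ := if Disjoint T B then 0 else 1

lemma hits_comm (B T : Finset α) : hits B T = hits T B := by
  simp only [hits, disjoint_comm]

variable [Fintype α]

noncomputable def wTransform (f : Finset α → ℝ) (S : Finset α) : ℝ :=
  ∑ T ∈ univ.filter (fun T => S ∪ T = univ), (-1 : ℝ) ^ (#(S ∩ T) + 1) * f T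

lemma wTransform_eq_sum_ite (f : Finset α → ℝ) (S : Finset α) :
    wTransform f S = ∑ T, if S ∪ T = univ then (-1 : ℝ) ^ (#(S ∩ T) + 1) * f T else 0 :=
  sum_filter _ _

/-- The sets `T` with `S ∪ T = univ` are exactly `Sᶜ ∪ X` for `X ⊆ S`, and then `S ∩ T = X`. -/
lemma wTransform_eq_neg_sum_powerset (f : Finset α → ℝ) (S : Finset α) :
    wTransform f S = -∑ X ∈ S.powerset, (-1 : ℝ) ^ #X * f (Sᶜ ∪ X) := by
  have compl_union_inter : ∀ T ∈ univ.filter (fun T => S ∪ T = univ), Sᶜ ∪ (S ∩ T) = T := by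
    intro T hT
    rw [union_inter_distrib_left, union_comm Sᶜ S, union_compl, univ_inter, union_eq_right]
    intro a haS
    have := (mem_filter.mp hT).2 ▸ mem_univ a
    simpa [mem_compl.mp haS] using this
  rw [wTransform, ← sum_neg_distrib]
  refine sum_nbij' (fun T => S ∩ T) (fun X => Sᶜ ∪ X) ?_ ?_ compl_union_inter ?_ ?_
  · exact fun T _ => mem_powerset.mpr inter_subset_left
  · intro X _
    simp [← union_assoc]
  · intro X hX
    rw [inter_union_distrib_left, inter_compl, empty_union,
      inter_eq_right.mpr (mem_powerset.mp hX)]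
  · intro T hT
    rw [compl_union_inter T hT, pow_succ]
    ring

lemma filter_powerset_disjoint_compl_union (S B : Finset α) :
    S.powerset.filter (fun X => Disjoint (Sᶜ ∪ X) B) =
      if B ⊆ S then (S \ B).powerset else ∅ := by
  ext X
  split_ifs with hBS
  · simp [disjoint_union_left, disjoint_compl_left_iff, hBS, subset_sdiff]
  · simp [disjoint_union_left, disjoint_compl_left_iff, hBS]

lemma sum_powerset_neg_one_pow_card_disjoint_compl_union (S B : Finset α) :
    ∑ X ∈ S.powerset, (if Disjoint (Sᶜ ∪ X) B then (-1 : ℝ) ^ #X else 0) =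
      if S = B then 1 else 0 := by
  rw [← sum_filter, filter_powerset_disjoint_compl_union]
  by_cases hBS : B ⊆ S
  · have : S \ B = ∅ ↔ S = B := by
      rw [sdiff_eq_empty_iff_subset, subset_antisymm_iff, and_iff_left hBS]
    simp only [if_pos hBS, sum_powerset_neg_one_pow_card_eq_ite, this]
  · rw [if_neg hBS, sum_empty, if_neg (by rintro rfl; exact hBS subset_rfl)]

lemma wTransform_hits (B S : Finset α) :
    wTransform (hits B) S = (if S = B then 1 else 0) - (if S = ∅ then 1 else 0) := by
  have hits_eq : ∀ T, hits B T = 1 - if Disjoint T B then 1 else 0 := fun T => by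
    unfold hits; split_ifs <;> norm_num
  simp only [wTransform_eq_neg_sum_powerset, hits_eq, mul_sub, mul_one, mul_ite, mul_zero,
    sum_sub_distrib, sum_powerset_neg_one_pow_card_eq_ite,
    sum_powerset_neg_one_pow_card_disjoint_compl_union]
  ring

lemma wTransform_sum_mul {ι : Type*} (s : Finset ι) (c : ι → ℝ) (g : ι → Finset α → ℝ)
    (S : Finset α) :
    wTransform (fun T => ∑ u ∈ s, c u * g u T) S = ∑ u ∈ s, c u * wTransform (g u) S := by
  simp only [wTransform, mul_sum]
  rw [sum_comm]
  refine sum_congr rfl fun u _ => sum_congr rfl fun T _ => ?_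
  ring

lemma sum_mul_wTransform_comm (f g : Finset α → ℝ) :
    ∑ S, g S * wTransform f S = ∑ T, f T * wTransform g T := by
  simp only [wTransform_eq_sum_ite, mul_sum]
  rw [sum_comm]
  refine sum_congr rfl fun T _ => sum_congr rfl fun S _ => ?_
  rw [union_comm, inter_comm]
  split_ifs <;> ring

lemma sum_hits_mul_wTransform (f : Finset α → ℝ) (T : Finset α) :
    ∑ S, hits T S * wTransform f S = f T - f ∅ := by
  simp [sum_mul_wTransform_comm f, wTransform_hits, mul_sub, sum_sub_distrib]

lemma sum_biUnion_eq_sum_mul_hits {U : Type*} [Fintype U] [DecidableEq U] (A : α → Finset U)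
    (wt : U → ℝ) (T : Finset α) :
    ∑ u ∈ T.biUnion A, wt u = ∑ u, wt u * hits (univ.filter (u ∈ A ·)) T := by
  have hbiUnion : T.biUnion A = univ.filter (fun u => ¬Disjoint T (univ.filter (u ∈ A ·))) := by
    ext u
    simp [not_disjoint_iff]
  rw [hbiUnion, sum_filter]
  refine sum_congr rfl fun u _ => ?_
  unfold hits
  split_ifs <;> ring

lemma wTransform_sum_mul_hits_nonneg {U : Type*} (s : Finset U) (B : U → Finset α) (wt : U → ℝ)
    (hwt : ∀ u, 0 ≤ wt u) {S : Finset α} (hS : S.Nonempty) :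
    0 ≤ wTransform (fun T => ∑ u ∈ s, wt u * hits (B u) T) S := by
  rw [wTransform_sum_mul]
  refine sum_nonneg fun u _ => mul_nonneg (hwt u) ?_
  rw [wTransform_hits, if_neg hS.ne_empty]
  split_ifs <;> norm_num

lemma eq_sum_biUnion_wTransform {f : Finset α → ℝ} (hf : f ∅ = 0) (T : Finset α) :
    f T = ∑ S ∈ T.biUnion (fun i => univ.filter (i ∈ ·)),
      if S.Nonempty then wTransform f S else 0 := by
  have hf_eq := sum_hits_mul_wTransform f T
  rw [hf, sub_zero] at hf_eq
  rw [sum_biUnion_eq_sum_mul_hits, ← hf_eq]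
  refine sum_congr rfl fun S _ => ?_
  have hS_eq : univ.filter (fun i => S ∈ univ.filter (i ∈ ·)) = S := by
    ext
    simp
  rw [hS_eq, hits_comm]
  rcases S.eq_empty_or_nonempty with rfl | hS
  · simp [hits]
  · rw [if_pos hS, mul_comm]

end SetFunction

open SetFunction

lemma Wcoef_eq_wTransform (m : ℕ) (f : Finset (Fin m) → ℝ) : Wcoef m f = wTransform f := rfl

theorem stmt2_general (m : ℕ) (f : Finset (Fin m) → ℝ) (hf : f ∅ = 0) :
    IsCoverage m f ↔ ∀ S : Finset (Fin m), S.Nonempty → 0 ≤ Wcoef m f S := by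
  rw [Wcoef_eq_wTransform]
  constructor
  · rintro ⟨U, _, _, A, wt, hwt, hfA⟩ S hS
    have hf_hits : f = fun T => ∑ u, wt u * hits (univ.filter (u ∈ A ·)) T :=
      funext fun T => (hfA T).trans (sum_biUnion_eq_sum_mul_hits A wt T)
    rw [hf_hits]
    exact wTransform_sum_mul_hits_nonneg _ _ wt hwt hS
  · intro hW
    refine ⟨Finset (Fin m), inferInstance, inferInstance, fun i => univ.filter (i ∈ ·),
      fun S => if S.Nonempty then wTransform f S else 0, fun S => ?_,
      eq_sum_biUnion_wTransform hf⟩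
    dsimp only
    split_ifs with hS
    exacts [hW S hS, le_rfl]

theorem stmt2 (m : ℕ) (hm : 1 ≤ m) (f : Finset (Fin m) → ℝ) (hf : f ∅ = 0) :
    IsCoverage m f ↔ ∀ S : Finset (Fin m), S.Nonempty → 0 ≤ Wcoef m f S :=
  stmt2_general m f hf
end

section
/- Let 𝒥 be any family of subsets of [m] with |𝒥| < 2^k. Then there exists a coverage function g : 2^[m] → ℝ that is consistent with f* on all queried sets, i.e., g(T) = f*(T) for every T ∈ 𝒥. -/
open Finset

/-- The weights defining the hard function `f*`: `N` on nonempty sets of size `≤ k`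
and `−1` on sets of size `> k`. -/
noncomputable def wstar (m k : ℕ) (N : ℝ) (S : Finset (Fin m)) : ℝ :=
  if S.card ≤ k then N else -1

/-- The hard function `f*(T) = Σ_{S nonempty, S ∩ T ≠ ∅} w*(S)`. -/
noncomputable def fstar (m k : ℕ) (N : ℝ) (T : Finset (Fin m)) : ℝ :=
  ∑ S ∈ univ.filter (fun S : Finset (Fin m) => S.Nonempty ∧ (S ∩ T).Nonempty), wstar m k N S

/-
Take the universe of all subsets `S ⊆ [m]`, with `A i = {S | i ∈ S}` and weights
`w* S + c S + 𝟙[k < |S|]`. On a query `T` this differs from `f*(T)` by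
`∑_{S ∩ T ≠ ∅} c S + #{S | k < |S|, S ∩ T ≠ ∅}`, so it suffices that `c` vanishes on sets of size
`> k`, sums to zero and satisfies `∑_{S ∩ T = ∅} c S = #{S | k < |S|, S ∩ T ≠ ∅}` on `J`.
Read as the coefficients of a multilinear polynomial of degree `≤ k`, such a `c` interpolates
prescribed values on the at most `2 ^ k` points `J ∪ {∅}`; it is built by splitting the points
along a separating coordinate and giving the smaller half (at most `2 ^ (k - 1)` points) the
lower-degree interpolant. Tracking the `ℓ¹` norm of `c` through the splitting gives
`|c S| ≤ (2 ^ m)! < N`, so all weights are nonnegative.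
-/

section Interpolation

variable {ι : Type*}

lemma exists_filter_mem_nonempty_and_filter_notMem_nonempty [DecidableEq ι]
    {S : Finset (Finset ι)} (hS : S.Nontrivial) :
    ∃ i, (S.filter (i ∈ ·)).Nonempty ∧ (S.filter (i ∉ ·)).Nonempty := by
  obtain ⟨Y₁, h₁, Y₂, h₂, hne⟩ := hS
  have : ¬ Y₁ ⊆ Y₂ ∨ ¬ Y₂ ⊆ Y₁ := by
    by_contra! h
    exact hne (h.1.antisymm h.2)
  rcases this with h | h <;> obtain ⟨i, hi, hi'⟩ := not_subset.1 h
  · exact ⟨i, ⟨Y₁, mem_filter.2 ⟨h₁, hi⟩⟩, ⟨Y₂, mem_filter.2 ⟨h₂, hi'⟩⟩⟩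
  · exact ⟨i, ⟨Y₂, mem_filter.2 ⟨h₂, hi⟩⟩, ⟨Y₁, mem_filter.2 ⟨h₁, hi'⟩⟩⟩

def DegreeLE (c : Finset ι → ℝ) (k : ℕ) : Prop := ∀ R, c R ≠ 0 → R.card ≤ k

lemma DegreeLE.mono {c : Finset ι → ℝ} {k l : ℕ} (hc : DegreeLE c k) (hkl : k ≤ l) :
    DegreeLE c l :=
  fun R hR => (hc R hR).trans hkl

lemma DegreeLE.add {c d : Finset ι → ℝ} {k : ℕ} (hc : DegreeLE c k) (hd : DegreeLE d k) :
    DegreeLE (c + d) k := by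
  intro R hR
  by_cases h : c R = 0
  · exact hd R (by simpa [h] using hR)
  · exact hc R h

lemma DegreeLE.sub {c d : Finset ι → ℝ} {k : ℕ} (hc : DegreeLE c k) (hd : DegreeLE d k) :
    DegreeLE (c - d) k := by
  intro R hR
  by_cases h : c R = 0
  · exact hd R (by simpa [h] using hR)
  · exact hc R h

variable [Fintype ι]

def l1Norm (c : Finset ι → ℝ) : ℝ := ∑ R, |c R|

lemma l1Norm_nonneg (c : Finset ι → ℝ) : 0 ≤ l1Norm c :=
  sum_nonneg fun R _ => abs_nonneg (c R)

lemma abs_le_l1Norm (c : Finset ι → ℝ) (R : Finset ι) : |c R| ≤ l1Norm c :=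
  single_le_sum (fun R _ => abs_nonneg (c R)) (mem_univ R)

lemma l1Norm_add_le (c d : Finset ι → ℝ) : l1Norm (c + d) ≤ l1Norm c + l1Norm d := by
  rw [l1Norm, l1Norm, l1Norm, ← sum_add_distrib]
  exact sum_le_sum fun R _ => abs_add_le (c R) (d R)

lemma l1Norm_sub_le (c d : Finset ι → ℝ) : l1Norm (c - d) ≤ l1Norm c + l1Norm d := by
  rw [l1Norm, l1Norm, l1Norm, ← sum_add_distrib]
  exact sum_le_sum fun R _ => abs_sub (c R) (d R)

variable [DecidableEq ι]

/- A coefficient function `c : Finset ι → ℝ` stands for the multilinear polynomial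
`∑ R, c R * ∏ j ∈ R, (1 - y j)`; `disjointSum c Y` is its value at the indicator vector of `Y`,
and `mulNotMem i c` is its product with `1 - y i`. -/

def disjointSum (c : Finset ι → ℝ) (Y : Finset ι) : ℝ := ∑ R with Disjoint R Y, c R

def mulNotMem (i : ι) (c : Finset ι → ℝ) (R : Finset ι) : ℝ := ∑ R' with insert i R' = R, c R'

lemma disjointSum_add (c d : Finset ι → ℝ) (Y : Finset ι) :
    disjointSum (c + d) Y = disjointSum c Y + disjointSum d Y :=
  sum_add_distrib

lemma disjointSum_sub (c d : Finset ι → ℝ) (Y : Finset ι) :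
    disjointSum (c - d) Y = disjointSum c Y - disjointSum d Y :=
  sum_sub_distrib ..

lemma disjointSum_empty (c : Finset ι → ℝ) : disjointSum c ∅ = ∑ R, c R := by
  simp [disjointSum]

lemma disjointSum_single_empty (a : ℝ) (Y : Finset ι) : disjointSum (Pi.single ∅ a) Y = a := by
  rw [disjointSum, sum_eq_single_of_mem ∅ (by simp)] <;> simp +contextual

lemma l1Norm_single_empty (a : ℝ) : l1Norm (Pi.single (∅ : Finset ι) a) = |a| := by
  rw [l1Norm, sum_eq_single_of_mem ∅ (mem_univ _)] <;> simp +contextual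

lemma abs_disjointSum_le (c : Finset ι → ℝ) (Y : Finset ι) : |disjointSum c Y| ≤ l1Norm c :=
  (abs_sum_le_sum_abs _ _).trans <| sum_le_univ_sum_of_nonneg fun R => abs_nonneg (c R)

lemma disjointSum_mulNotMem (i : ι) (c : Finset ι → ℝ) (Y : Finset ι) :
    disjointSum (mulNotMem i c) Y = if i ∈ Y then 0 else disjointSum c Y := by
  simp only [disjointSum, mulNotMem]
  rw [sum_fiberwise_eq_sum_filter]
  split_ifs with hi <;> simp [disjoint_insert_left, hi]

lemma l1Norm_mulNotMem_le (i : ι) (c : Finset ι → ℝ) : l1Norm (mulNotMem i c) ≤ l1Norm c :=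
  calc l1Norm (mulNotMem i c)
      ≤ ∑ R, ∑ R' with insert i R' = R, |c R'| :=
        sum_le_sum fun _ _ => abs_sum_le_sum_abs _ _
    _ = l1Norm c := sum_fiberwise _ _ _

lemma DegreeLE.mulNotMem {c : Finset ι → ℝ} {k : ℕ} (hc : DegreeLE c k) (i : ι) :
    DegreeLE (mulNotMem i c) (k + 1) := by
  intro R hR
  obtain ⟨R', hR', hc'⟩ := exists_ne_zero_of_sum_ne_zero hR
  rw [← (mem_filter.1 hR').2]
  exact (card_insert_le i R').trans (Nat.succ_le_succ (hc R' hc'))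

def IsDegreeOneIndicator (P : Finset ι → Prop) [DecidablePred P] : Prop :=
  ∀ (c : Finset ι → ℝ) (k : ℕ), DegreeLE c k → ∃ c', DegreeLE c' (k + 1) ∧
    l1Norm c' ≤ 2 * l1Norm c ∧ ∀ Y, disjointSum c' Y = if P Y then disjointSum c Y else 0

lemma isDegreeOneIndicator_notMem (i : ι) : IsDegreeOneIndicator (i ∉ ·) := by
  intro c k hc
  refine ⟨mulNotMem i c, hc.mulNotMem i, ?_, fun Y => ?_⟩
  · linarith [l1Norm_mulNotMem_le i c, l1Norm_nonneg c]
  · rw [disjointSum_mulNotMem]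
    split_ifs <;> simp_all

lemma isDegreeOneIndicator_mem (i : ι) : IsDegreeOneIndicator (i ∈ ·) := by
  intro c k hc
  refine ⟨c - mulNotMem i c, (hc.mono k.le_succ).sub (hc.mulNotMem i), ?_, fun Y => ?_⟩
  · linarith [l1Norm_sub_le c (mulNotMem i c), l1Norm_mulNotMem_le i c]
  · rw [disjointSum_sub, disjointSum_mulNotMem]
    split_ifs <;> simp

/-- The norm bound is put in this shape because `2 * (l1Norm c + M)` is multiplicative under the
splitting in `HasBoundedInterpolation.of_filter`. -/
def HasBoundedInterpolation (S : Finset (Finset ι)) (k : ℕ) : Prop :=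
  ∀ (φ : Finset ι → ℝ) (M : ℝ), (∀ Y ∈ S, |φ Y| ≤ M) → ∃ c, DegreeLE c k ∧
    2 * (l1Norm c + M) ≤ 4 ^ S.card * M ∧ ∀ Y ∈ S, disjointSum c Y = φ Y

lemma hasBoundedInterpolation_singleton (Y₀ : Finset ι) (k : ℕ) :
    HasBoundedInterpolation {Y₀} k := by
  intro φ M hφ
  have hY₀ := hφ Y₀ (mem_singleton_self Y₀)
  refine ⟨Pi.single ∅ (φ Y₀), fun R hR => ?_, ?_, ?_⟩
  · rw [of_not_not fun h => hR (Pi.single_eq_of_ne h _)]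
    simp
  · simp only [l1Norm_single_empty, card_singleton]
    linarith
  · simp [disjointSum_single_empty]

/-- Interpolate first on the sets outside `P` (by `q`), then correct on the sets in `P` by a
polynomial `p` of lower degree times the indicator of `P`. -/
lemma HasBoundedInterpolation.of_filter {S : Finset (Finset ι)} {k : ℕ}
    {P : Finset ι → Prop} [DecidablePred P] (hP : IsDegreeOneIndicator P)
    (hne : (S.filter P).Nonempty) (h₀ : HasBoundedInterpolation (S.filter P) k)
    (h₁ : HasBoundedInterpolation (S.filter (¬ P ·)) (k + 1)) :
    HasBoundedInterpolation S (k + 1) := by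
  intro φ M hφ
  obtain ⟨Y₀, hY₀⟩ := hne
  have hM : 0 ≤ M := (abs_nonneg _).trans (hφ Y₀ (mem_filter.1 hY₀).1)
  obtain ⟨q, hq_deg, hq_norm, hq⟩ := h₁ φ M fun Y hY => hφ Y (mem_filter.1 hY).1
  obtain ⟨p, hp_deg, hp_norm, hp⟩ := h₀ (fun Y => φ Y - disjointSum q Y) (M + l1Norm q)
    fun Y hY => (abs_sub _ _).trans <|
      add_le_add (hφ Y (mem_filter.1 hY).1) (abs_disjointSum_le q Y)
  obtain ⟨p', hp'_deg, hp'_norm, hp'⟩ := hP p k hp_deg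
  refine ⟨q + p', hq_deg.add hp'_deg, ?_, fun Y hY => ?_⟩
  · have hcard : 4 ^ S.card = (4 : ℝ) ^ (S.filter P).card * 4 ^ (S.filter (¬ P ·)).card := by
      rw [← pow_add, card_filter_add_card_filter_not]
    have hpow : (0 : ℝ) ≤ 4 ^ (S.filter P).card := by positivity
    have := mul_le_mul_of_nonneg_left hq_norm hpow
    nlinarith [l1Norm_add_le q p', l1Norm_nonneg q]
  · rw [disjointSum_add, hp']
    by_cases hPY : P Y
    · rw [if_pos hPY, hp Y (mem_filter.2 ⟨hY, hPY⟩)]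
      ring
    · rw [if_neg hPY, hq Y (mem_filter.2 ⟨hY, hPY⟩), add_zero]

theorem hasBoundedInterpolation {S : Finset (Finset ι)} (hS : S.Nonempty) {k : ℕ}
    (hk : S.card ≤ 2 ^ k) : HasBoundedInterpolation S k := by
  induction S using Finset.strongInduction generalizing k with | H S ih =>
  obtain ⟨Y₀, rfl⟩ | hS := hS.exists_eq_singleton_or_nontrivial
  · exact hasBoundedInterpolation_singleton Y₀ k
  obtain ⟨i, hin, hout⟩ := exists_filter_mem_nonempty_and_filter_notMem_nonempty hS
  obtain ⟨k, rfl⟩ : ∃ k', k = k' + 1 := Nat.exists_eq_add_one.2 <| Nat.pos_of_ne_zero <| by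
    rintro rfl
    exact absurd (one_lt_card_iff_nontrivial.2 hS) (by simpa using hk)
  have hcard := card_filter_add_card_filter_not (s := S) (p := (i ∈ ·))
  have hin_ss : S.filter (i ∈ ·) ⊂ S := by
    obtain ⟨Y, hY⟩ := hout
    exact filter_ssubset.2 ⟨Y, mem_filter.1 hY⟩
  have hout_ss : S.filter (i ∉ ·) ⊂ S := by
    obtain ⟨Y, hY⟩ := hin
    exact filter_ssubset.2 ⟨Y, by simpa using mem_filter.1 hY⟩
  have hk' : S.card ≤ 2 * 2 ^ k := by rwa [← pow_succ']
  rcases le_total (S.filter (i ∈ ·)).card (S.filter (i ∉ ·)).card with h | h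
  · exact .of_filter (isDegreeOneIndicator_mem i) hin (ih _ hin_ss hin (by omega))
      (ih _ hout_ss hout ((card_filter_le _ _).trans hk))
  · refine .of_filter (isDegreeOneIndicator_notMem i) hout (ih _ hout_ss hout (by omega)) ?_
    simpa only [not_not] using ih _ hin_ss hin ((card_filter_le _ _).trans hk)

end Interpolation

lemma two_pow_mul_sub_two_le_two_mul_factorial (n : ℕ) : 2 ^ n * (n - 2) ≤ 2 * n.factorial := by
  obtain hn | ⟨n, rfl⟩ : n < 3 ∨ ∃ j, n = j + 3 := by
    rcases lt_or_ge n 3 with h | h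
    exacts [.inl h, .inr ⟨n - 3, by omega⟩]
  · interval_cases n <;> decide
  induction n with
  | zero => decide
  | succ n ih =>
    rw [show n + 3 - 2 = n + 1 by omega] at ih
    rw [show n + 1 + 3 - 2 = n + 2 by omega, Nat.factorial_succ, pow_succ]
    have hpoly : 2 * (n + 2) ≤ (n + 1) * (n + 1 + 3) := by nlinarith
    calc 2 ^ (n + 3) * 2 * (n + 2) = 2 ^ (n + 3) * (2 * (n + 2)) := by ring
      _ ≤ 2 ^ (n + 3) * ((n + 1) * (n + 1 + 3)) := Nat.mul_le_mul_left _ hpoly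
      _ = (n + 1 + 3) * (2 ^ (n + 3) * (n + 1)) := by ring
      _ ≤ (n + 1 + 3) * (2 * (n + 3).factorial) := Nat.mul_le_mul_left _ ih
      _ = 2 * ((n + 3 + 1) * (n + 3).factorial) := by ring

lemma four_pow_mul_le_two_mul_factorial {m n M : ℕ} (hn : n ≤ 2 ^ (m - 1)) (hM : M + 2 ≤ 2 ^ m) :
    4 ^ n * M ≤ 2 * (2 ^ m).factorial := by
  have hm : m ≠ 0 := by rintro rfl; simp at hM
  have h4 : 4 ^ (2 ^ (m - 1)) = 2 ^ 2 ^ m := by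
    rw [show (4 : ℕ) = 2 ^ 2 by rfl, ← pow_mul, ← pow_succ']
    congr 2
    omega
  have hpow : 4 ^ n ≤ 2 ^ 2 ^ m := h4 ▸ Nat.pow_le_pow_right (by norm_num) hn
  exact (Nat.mul_le_mul hpow (by omega : M ≤ 2 ^ m - 2)).trans
    (two_pow_mul_sub_two_le_two_mul_factorial (2 ^ m))

lemma card_filter_lt_card_add_two_le {m k : ℕ} (hk : 1 ≤ k) (hm : 1 ≤ m) :
    #(univ.filter fun S : Finset (Fin m) => k < S.card) + 2 ≤ 2 ^ m := by
  have hsub : univ.filter (fun S : Finset (Fin m) => k < S.card) ⊆ univ \ {∅, {⟨0, hm⟩}} := by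
    intro S hS
    simp only [mem_filter, mem_univ, true_and] at hS
    simp only [mem_sdiff, mem_univ, mem_insert, mem_singleton, true_and]
    rintro (rfl | rfl) <;> simp only [card_empty, card_singleton] at hS <;> omega
  have := card_le_card hsub
  rw [card_sdiff_of_subset (subset_univ _), card_univ, Fintype.card_finset, Fintype.card_fin,
    card_pair (by simp)] at this
  have : 2 ≤ 2 ^ m := Nat.le_self_pow (by omega) 2
  omega

lemma sum_inter_nonempty_eq {ι : Type*} [Fintype ι] [DecidableEq ι] (c : Finset ι → ℝ)
    (T : Finset ι) : ∑ S with (S ∩ T).Nonempty, c S = ∑ S, c S - disjointSum c T := by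
  rw [← sum_filter_add_sum_filter_not univ (fun S => (S ∩ T).Nonempty), disjointSum]
  simp only [← not_disjoint_iff_nonempty_inter, not_not, add_sub_cancel_right]

lemma isCoverage_sum_inter_nonempty {m : ℕ} (w : Finset (Fin m) → ℝ) (hw : ∀ S, 0 ≤ w S) :
    IsCoverage m fun T => ∑ S with (S ∩ T).Nonempty, w S := by
  refine ⟨Finset (Fin m), inferInstance, inferInstance, fun i => {S | i ∈ S}, w, hw, fun T => ?_⟩
  refine sum_congr ?_ fun _ _ => rfl
  ext S
  simp [Finset.Nonempty, and_comm]

lemma fstar_eq_sum_inter_nonempty (m k : ℕ) (N : ℝ) (T : Finset (Fin m)) :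
    fstar m k N T = ∑ S with (S ∩ T).Nonempty, wstar m k N S := by
  refine sum_congr (filter_congr fun S _ => ?_) fun _ _ => rfl
  exact and_iff_right_of_imp fun h => h.mono inter_subset_left

lemma wstar_add_nonneg {m k : ℕ} {N : ℝ} {c : Finset (Fin m) → ℝ} (hdeg : DegreeLE c k)
    (hc : ∀ S, |c S| ≤ N) (S : Finset (Fin m)) :
    0 ≤ wstar m k N S + c S + if k < S.card then 1 else 0 := by
  unfold wstar
  split_ifs with h₁ h₂ h₂
  · omega
  · linarith [(abs_le.1 (hc S)).1]
  · simp [of_not_not fun h => h₁ (hdeg S h)]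
  · omega

theorem stmt8_general (m k : ℕ) (hk1 : 1 ≤ k) (hk2 : k ≤ m - 1)
    (N : ℝ) (hN : (Nat.factorial (2 ^ m) : ℝ) < N)
    (J : Finset (Finset (Fin m))) (hJ : J.card < 2 ^ k) :
    ∃ g : Finset (Fin m) → ℝ, IsCoverage m g ∧ ∀ T ∈ J, g T = fstar m k N T := by
  set φ : Finset (Fin m) → ℝ := fun T => #(univ.filter fun S => k < S.card ∧ (S ∩ T).Nonempty)
  set M := #(univ.filter fun S : Finset (Fin m) => k < S.card)
  have hφ : ∀ T ∈ insert ∅ J, |φ T| ≤ M := fun T _ => by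
    rw [abs_of_nonneg (Nat.cast_nonneg _)]
    exact Nat.cast_le.2 <| card_le_card <|
      monotone_filter_right univ fun S _ (h : k < S.card ∧ _) => h.1
  obtain ⟨c, hdeg, hnorm, hc⟩ := hasBoundedInterpolation (insert_nonempty ∅ J)
    ((card_insert_le ∅ J).trans hJ) φ M hφ
  have hsum : ∑ S, c S = 0 := by simpa [disjointSum_empty, φ] using hc ∅ (mem_insert_self ∅ J)
  have hc_le : ∀ S, |c S| ≤ N := by
    have hn := (card_insert_le ∅ J).trans (hJ.trans_le (Nat.pow_le_pow_right two_pos hk2))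
    have hbound : (4 : ℝ) ^ #(insert ∅ J) * M ≤ 2 * (2 ^ m).factorial := by
      exact_mod_cast four_pow_mul_le_two_mul_factorial hn
        (card_filter_lt_card_add_two_le hk1 (by omega))
    intro S
    linarith [hnorm, abs_le_l1Norm c S, l1Norm_nonneg c, (M.cast_nonneg : (0 : ℝ) ≤ M)]
  refine ⟨_, isCoverage_sum_inter_nonempty _ (wstar_add_nonneg hdeg hc_le), fun T hT => ?_⟩
  rw [fstar_eq_sum_inter_nonempty, sum_add_distrib, sum_add_distrib, sum_inter_nonempty_eq c,
    hsum, hc T (mem_insert_of_mem hT), sum_ite, sum_const_zero, sum_const, filter_filter]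
  simp [φ, and_comm]

theorem stmt8 (m k : ℕ) (hm : 2 ≤ m) (hk1 : 1 ≤ k) (hk2 : k ≤ m - 1)
    (N : ℝ) (hN : (Nat.factorial (2 ^ m) : ℝ) < N)
    (J : Finset (Finset (Fin m))) (hJ : J.card < 2 ^ k) :
    ∃ g : Finset (Fin m) → ℝ, IsCoverage m g ∧ ∀ T ∈ J, g T = fstar m k N T :=
  stmt8_general m k hk1 hk2 N hN J hJ
end

section
/- Any certificate of non-coverageness of f* must be of size at least 2^k: if 𝒥 is a family of subsets of [m] such that no coverage function g satisfies g(T) = f*(T) for all T ∈ 𝒥, then |𝒥| ≥ 2^k. -/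
/-
Writing `coverSum w T` for the total weight `w S` of the sets `S` meeting `T`, the coverage
functions on `[m]` are exactly the maps `coverSum w` with `w ≥ 0`, and `f* = coverSum w*`. The
only negative weights of `w*` sit on sets `S` with `|S| > k`. For such an `S` and a family `J`
with `|J| < 2^k ≤ 2^|S| - 1`, some `L ⊂ S` differs from every `S \ T`, `T ∈ J`; the signed
indicator `S' ↦ (-1)^(|S| + |S'|)` of the interval `[L, S]` is `1` at `S`, supported below `S`,
and by the alternating sum over an interval it is invisible to `coverSum` on every `T ∈ J`.
Adding such corrections, large sets first, makes all large weights nonnegative while lowering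
any weight by less than `2^(2^m - 1) ≤ (2^m)! < N`, so the weights `N` of the small sets stay
nonnegative. The result is a coverage function agreeing with `f*` on `J`.
-/

open Finset

section CoverSum

variable {α : Type*} [DecidableEq α]

theorem sum_Icc_neg_one_pow_card {R : Type*} [CommRing R] (L X : Finset α) :
    ∑ S ∈ Icc L X, (-1 : R) ^ #S = if L = X then (-1) ^ #L else 0 := by
  by_cases hLX : L ⊆ X
  · have hpow : ∑ Y ∈ (X \ L).powerset, (-1 : R) ^ #Y = if X \ L = ∅ then 1 else 0 := by
      have := congrArg (Int.cast : ℤ → R) (sum_powerset_neg_one_pow_card (x := X \ L))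
      push_cast at this
      simpa using this
    have hinj : Set.InjOn (L ∪ ·) ((X \ L).powerset : Set (Finset α)) := by
      intro Y hY Z hZ h
      simp only [coe_powerset, Set.mem_preimage, Set.mem_powerset_iff, coe_subset] at hY hZ
      rw [← union_sdiff_cancel_left (disjoint_of_subset_right hY sdiff_disjoint.symm),
        ← union_sdiff_cancel_left (disjoint_of_subset_right hZ sdiff_disjoint.symm)]
      exact congrArg (· \ L) h
    rw [Icc_eq_image_powerset hLX, sum_image hinj]
    have hcard : ∀ Y ∈ (X \ L).powerset, (-1 : R) ^ #(L ∪ Y) = (-1) ^ #L * (-1) ^ #Y :=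
      fun Y hY => by
        rw [card_union_of_disjoint
          (disjoint_of_subset_right (mem_powerset.1 hY) sdiff_disjoint.symm), pow_add]
    rw [sum_congr rfl hcard, ← mul_sum, hpow]
    by_cases h : L = X
    · simp [h]
    · rw [if_neg fun hXL => h (hLX.antisymm (sdiff_eq_empty_iff_subset.1 hXL)), if_neg h, mul_zero]
  · rw [Icc_eq_empty hLX, sum_empty, if_neg fun h => hLX h.le]

def signedIcc (L S S' : Finset α) : ℝ :=
  if S' ∈ Icc L S then (-1) ^ (#S + #S') else 0

theorem signedIcc_self {L S : Finset α} (h : L ⊆ S) : signedIcc L S S = 1 := by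
  rw [signedIcc, if_pos (mem_Icc.2 ⟨h, le_rfl⟩), ← two_mul, pow_mul]
  norm_num

theorem signedIcc_eq_zero_of_not_subset {L S S' : Finset α} (h : ¬S' ⊆ S) :
    signedIcc L S S' = 0 :=
  if_neg fun hS' => h (mem_Icc.1 hS').2

theorem neg_one_le_signedIcc (L S S' : Finset α) : -1 ≤ signedIcc L S S' := by
  unfold signedIcc
  split_ifs
  · rcases neg_one_pow_eq_or ℝ (#S + #S') with h | h <;> norm_num [h]
  · norm_num

theorem exists_ssubset_forall_ne_sdiff (J : Finset (Finset α)) (S : Finset α)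
    (hJ : #J + 1 < 2 ^ #S) : ∃ L ⊂ S, ∀ T ∈ J, L ≠ S \ T := by
  have hcard : #(J.image (S \ ·)) < #(Iio S) := by
    rw [card_Iio_finset]
    have := card_image_le (s := J) (f := (S \ ·))
    omega
  obtain ⟨L, hLS, hLJ⟩ := exists_mem_notMem_of_card_lt_card hcard
  exact ⟨L, mem_Iio.1 hLS, fun T hT h => hLJ (mem_image.2 ⟨T, hT, h.symm⟩)⟩

variable [Fintype α]

noncomputable def coverSum (w : Finset α → ℝ) (T : Finset α) : ℝ :=
  ∑ S ∈ univ.filter (fun S => (S ∩ T).Nonempty), w S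

theorem coverSum_add_mul (w ρ : Finset α → ℝ) (c : ℝ) (T : Finset α) :
    coverSum (fun S => w S + c * ρ S) T = coverSum w T + c * coverSum ρ T := by
  simp only [coverSum, sum_add_distrib, mul_sum]

theorem coverSum_eq_sub (w : Finset α → ℝ) (T : Finset α) :
    coverSum w T = ∑ S, w S - ∑ S ∈ univ.filter (Disjoint · T), w S := by
  rw [← sum_filter_add_sum_filter_not univ (fun S => (S ∩ T).Nonempty) w, coverSum]
  simp only [← not_disjoint_iff_nonempty_inter, not_not, add_sub_cancel_right]

/-- Since `S' ⊆ S` avoids `T` iff `S' ⊆ S \ T`, this is the difference of two alternating sums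
over intervals, `[L, S]` and `[L, S \ T]`. -/
theorem coverSum_signedIcc {L S T : Finset α} (hS : L ≠ S) (hT : L ≠ S \ T) :
    coverSum (signedIcc L S) T = 0 := by
  have hdisj : univ.filter (Disjoint · T) ∩ Icc L S = Icc L (S \ T) := by
    ext S'
    simp only [mem_inter, mem_filter, mem_univ, true_and, mem_Icc, subset_sdiff]
    tauto
  simp only [coverSum_eq_sub, signedIcc, sum_ite_mem, univ_inter, hdisj, pow_add, ← mul_sum,
    sum_Icc_neg_one_pow_card, if_neg hS, if_neg hT, mul_zero, sub_zero]

theorem exists_nonneg_on_coverSum_eq (J : Finset (Finset α)) (w₀ : Finset α → ℝ)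
    (s : Finset (Finset α)) (hs : ∀ S ∈ s, #J + 1 < 2 ^ #S) (hw₀ : ∀ S ∈ s, -1 ≤ w₀ S) :
    ∃ w : Finset α → ℝ, (∀ T ∈ J, coverSum w T = coverSum w₀ T) ∧ (∀ S ∈ s, 0 ≤ w S) ∧
      ∀ S, w₀ S - (2 ^ #s - 1) ≤ w S := by
  induction s using Finset.induction_on_min_value (card : Finset α → ℕ) with
  | empty => exact ⟨w₀, fun _ _ => rfl, by simp, fun S => by simp⟩
  | insert a s ha hmin ih =>
    rw [forall_mem_insert] at hs hw₀
    obtain ⟨w, hwJ, hws, hw⟩ := ih hs.2 hw₀.2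
    obtain ⟨L, hLa, hLJ⟩ := exists_ssubset_forall_ne_sdiff J a hs.1
    set t := max 0 (-w a)
    have ht : 0 ≤ t := le_max_left _ _
    have hta : t ≤ 2 ^ #s := max_le (by positivity) (by linarith [hw a, hw₀.1])
    -- the sets of `s` are at least as large as `a`, so none of them lies strictly below `a`
    have hρs : ∀ x ∈ s, signedIcc L a x = 0 := fun x hx =>
      signedIcc_eq_zero_of_not_subset fun hxa =>
        ha (eq_of_subset_of_card_le hxa (hmin x hx) ▸ hx)
    refine ⟨fun S => w S + t * signedIcc L a S, fun T hT => ?_, ?_, fun S => ?_⟩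
    · rw [coverSum_add_mul, coverSum_signedIcc hLa.ne (hLJ T hT), mul_zero, add_zero, hwJ T hT]
    · refine forall_mem_insert _ _ _ |>.2 ⟨?_, fun x hx => ?_⟩
      · simp only [signedIcc_self hLa.subset, mul_one]
        linarith [le_max_right 0 (-w a)]
      · simpa only [hρs x hx, mul_zero, add_zero] using hws x hx
    · have := mul_le_mul_of_nonneg_left (neg_one_le_signedIcc L a S) ht
      rw [card_insert_of_notMem ha, pow_succ]
      linarith [hw S]

end CoverSum

theorem isCoverage_coverSum {m : ℕ} (w : Finset (Fin m) → ℝ) (hw : ∀ S, 0 ≤ w S) :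
    IsCoverage m (coverSum w) := by
  refine ⟨Finset (Fin m), inferInstance, inferInstance, fun i => univ.filter (i ∈ ·), w, hw,
    fun T => ?_⟩
  rw [coverSum]
  congr 1
  ext S
  simp only [mem_biUnion, mem_filter, mem_univ, true_and, Finset.Nonempty, mem_inter]
  tauto

theorem fstar_eq_coverSum (m k : ℕ) (N : ℝ) : fstar m k N = coverSum (wstar m k N) := by
  ext T
  refine sum_congr (filter_congr fun S _ => ?_) fun _ _ => rfl
  exact and_iff_right_of_imp fun h => h.mono inter_subset_left

theorem Nat.two_pow_le_factorial_succ (n : ℕ) : 2 ^ n ≤ (n + 1).factorial := by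
  induction n with
  | zero => rfl
  | succ n ih =>
    rw [pow_succ', Nat.factorial_succ]
    exact Nat.mul_le_mul (by omega) ih

theorem two_pow_card_le_factorial_of_empty_notMem {α : Type*} [Fintype α] [DecidableEq α]
    {s : Finset (Finset α)} (hs : ∅ ∉ s) : 2 ^ #s ≤ (2 ^ Fintype.card α).factorial := by
  have hcard : #s < 2 ^ Fintype.card α := by
    rw [← Fintype.card_finset, ← card_univ]
    exact card_lt_card ⟨subset_univ s, fun h => hs (h (mem_univ ∅))⟩
  exact (Nat.two_pow_le_factorial_succ _).trans (Nat.factorial_le hcard)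

theorem stmt9_general (m k : ℕ)
    (N : ℝ) (hN : (Nat.factorial (2 ^ m) : ℝ) < N)
    (J : Finset (Finset (Fin m)))
    (hcert : ¬ ∃ g : Finset (Fin m) → ℝ, IsCoverage m g ∧ ∀ T ∈ J, g T = fstar m k N T) :
    2 ^ k ≤ J.card := by
  by_contra! hJ
  set large := univ.filter fun S : Finset (Fin m) => k < #S
  have hlarge : ∀ S ∈ large, #J + 1 < 2 ^ #S := fun S hS =>
    (Nat.pow_lt_pow_right one_lt_two (mem_filter.1 hS).2).trans_le' hJ
  obtain ⟨w, hwJ, hw_large, hw⟩ := exists_nonneg_on_coverSum_eq J (wstar m k N) large hlarge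
    fun S hS => by rw [wstar, if_neg (not_le.2 (mem_filter.1 hS).2)]
  have hloss : (2 : ℝ) ^ #large ≤ Nat.factorial (2 ^ m) := by
    exact_mod_cast Fintype.card_fin m ▸
      two_pow_card_le_factorial_of_empty_notMem (s := large) (by simp [large])
  refine hcert ⟨coverSum w, isCoverage_coverSum w fun S => ?_, fun T hT => ?_⟩
  · by_cases hS : k < #S
    · exact hw_large S (mem_filter.2 ⟨mem_univ S, hS⟩)
    · have := hw S
      rw [wstar, if_pos (not_lt.1 hS)] at this
      linarith
  · rw [hwJ T hT, fstar_eq_coverSum]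

theorem stmt9 (m k : ℕ) (hm : 2 ≤ m) (hk1 : 1 ≤ k) (hk2 : k ≤ m - 1)
    (N : ℝ) (hN : (Nat.factorial (2 ^ m) : ℝ) < N)
    (J : Finset (Finset (Fin m)))
    (hcert : ¬ ∃ g : Finset (Fin m) → ℝ, IsCoverage m g ∧ ∀ T ∈ J, g T = fstar m k N T) :
    2 ^ k ≤ J.card :=
  stmt9_general m k N hN J hcert
end

section
/- Let m ≥ 1 and 0 ≤ k ≤ m−1. Let α : 2^[m] → ℝ be a function with α(S) ≥ 0 for all S, such that α(S) = 0 whenever |S| ≤ k, and such that α is not identically zero. Then g_α(T) > 0 for at least 2^k subsets T ⊆ [m]. -/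
open Finset

/-- `g_α(T) = Σ_{S : S ∪ T = [m]} (−1)^{|S ∩ T| + 1} α(S)`. -/
noncomputable def gAlpha (m : ℕ) (α : Finset (Fin m) → ℝ) (T : Finset (Fin m)) : ℝ :=
  ∑ S ∈ univ.filter (fun S : Finset (Fin m) => S ∪ T = univ),
    (-1 : ℝ) ^ ((S ∩ T).card + 1) * α S

/-!
Summing `g_α` over a fibre `{T | T ∩ X = Y}` of the restriction to `X` yields the same expression
computed on the ground set `X`, because the alternating sums over the subcubes that appear vanish.
Take `X` inclusion-minimal with `α X ≠ 0`; then `k < |X|`, and the fibre sum over `Y ⊆ X` is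
`(-1)^(|Y|+1) α X`. For `x ∈ X` and `W ⊆ X \ {x}`, the fibres over `W` and `W ∪ {x}` therefore have
opposite nonzero sums, so one of them contains a `T` with `g_α(T) > 0`. These `T` have pairwise
distinct traces on `X \ {x}`, so there are at least `2^(|X|-1) ≥ 2^k` of them.
-/

namespace Finset

variable {ι R : Type*} [DecidableEq ι] [Ring R]

theorem sum_Icc_neg_one_pow_card (A B : Finset ι) :
    ∑ T ∈ Icc A B, (-1 : R) ^ #T = if A = B then (-1) ^ #A else 0 := by
  by_cases hAB : A ⊆ B
  · have hdisj : ∀ U ∈ (B \ A).powerset, Disjoint A U :=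
      fun U hU => disjoint_sdiff.mono_right (mem_powerset.1 hU)
    have hcube : ∑ U ∈ (B \ A).powerset, (-1 : R) ^ #U = if B \ A = ∅ then 1 else 0 := by
      exact_mod_cast congrArg (Int.cast : ℤ → R) (sum_powerset_neg_one_pow_card (x := B \ A))
    have hempty : B \ A = ∅ ↔ A = B := by
      rw [sdiff_eq_empty_iff_subset]
      exact ⟨subset_antisymm hAB, fun h => h ▸ subset_rfl⟩
    rw [Icc_eq_image_powerset hAB, sum_image fun U hU V hV hUV => by
      rw [← union_sdiff_cancel_left (hdisj U hU), hUV, union_sdiff_cancel_left (hdisj V hV)]]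
    rw [sum_congr rfl fun U hU => by rw [card_union_of_disjoint (hdisj U hU), pow_add],
      ← mul_sum, hcube]
    simp only [hempty, mul_ite, mul_one, mul_zero]
  · rw [Icc_eq_empty hAB, sum_empty, if_neg (by rintro rfl; exact hAB subset_rfl)]

theorem neg_one_pow_card_inter_of_union_eq_univ [Fintype ι] {S T : Finset ι}
    (h : S ∪ T = univ) :
    (-1 : R) ^ #(S ∩ T) = (-1) ^ (#S + Fintype.card ι) * (-1) ^ #T := by
  have hcard := card_union_add_card_inter S T
  rw [h, card_univ] at hcard
  rw [← pow_add, show #S + Fintype.card ι + #T = #(S ∩ T) + 2 * Fintype.card ι by omega,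
    pow_add, pow_mul, neg_one_sq, one_pow, mul_one]

theorem sum_filter_inter_eq_neg_one_pow_card_inter [Fintype ι] {X Y : Finset ι} (hY : Y ⊆ X)
    (S : Finset ι) :
    ∑ T with T ∩ X = Y ∧ S ∪ T = univ, (-1 : R) ^ #(S ∩ T) =
      if S ⊆ X ∧ S ∪ Y = X then (-1) ^ #(S ∩ Y) else 0 := by
  have hfiber : ({T | T ∩ X = Y ∧ S ∪ T = univ} : Finset (Finset ι)) =
      Icc (Y ∪ Sᶜ) (Y ∪ Xᶜ) := by
    ext T
    simp only [mem_filter, mem_univ, true_and, mem_Icc, Finset.ext_iff, subset_iff, mem_inter,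
      mem_union, mem_compl]
    grind
  have hends : Y ∪ Sᶜ = Y ∪ Xᶜ ↔ S ⊆ X ∧ S ∪ Y = X := by
    simp only [Finset.ext_iff, subset_iff, mem_union, mem_compl]
    grind
  have hcover : ∀ {T}, Sᶜ ⊆ T → S ∪ T = univ := fun h =>
    codisjoint_iff.1 (codisjoint_iff_compl_le_right.2 h)
  rw [hfiber, sum_congr rfl fun T hT => neg_one_pow_card_inter_of_union_eq_univ
    (hcover (subset_union_right.trans (mem_Icc.1 hT).1)), ← mul_sum, sum_Icc_neg_one_pow_card]
  simp only [hends, mul_ite, mul_zero]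
  rw [← neg_one_pow_card_inter_of_union_eq_univ (hcover subset_union_right),
    inter_union_distrib_left, inter_compl, union_empty]

theorem two_pow_card_sub_one_le_card {P : Finset (Finset ι)} {s : Finset ι} {x : ι}
    (hx : x ∈ s) (h : ∀ W ⊆ s.erase x, ∃ T ∈ P, T ∩ s = W ∨ T ∩ s = insert x W) :
    2 ^ (#s - 1) ≤ #P := by
  calc 2 ^ (#s - 1) = #(s.erase x).powerset := by rw [card_powerset, card_erase_of_mem hx]
    _ ≤ #(P.image (· ∩ s.erase x)) := card_le_card fun W hW => by
        have hxW : x ∉ W := fun hxW => notMem_erase x s (mem_powerset.1 hW hxW)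
        obtain ⟨T, hT, hTW⟩ := h W (mem_powerset.1 hW)
        refine mem_image.2 ⟨T, hT, ?_⟩
        rcases hTW with hTW | hTW <;>
          simp only [inter_erase, hTW, erase_insert hxW, erase_eq_of_notMem hxW]
    _ ≤ #P := card_image_le

end Finset

section gAlpha

variable {m : ℕ} {α : Finset (Fin m) → ℝ} {X Y : Finset (Fin m)}

theorem sum_gAlpha_filter_inter_eq (hY : Y ⊆ X) :
    ∑ T with T ∩ X = Y, gAlpha m α T =
      ∑ S ∈ X.powerset with S ∪ Y = X, (-1) ^ (#(S ∩ Y) + 1) * α S := by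
  calc ∑ T with T ∩ X = Y, gAlpha m α T
      = ∑ S, ∑ T with T ∩ X = Y ∧ S ∪ T = univ, (-1) ^ (#(S ∩ T) + 1) * α S :=
        sum_comm' fun T S => by simp only [mem_filter, mem_univ, true_and]; tauto
    _ = ∑ S, if S ⊆ X ∧ S ∪ Y = X then (-1) ^ (#(S ∩ Y) + 1) * α S else 0 := by
        refine sum_congr rfl fun S _ => ?_
        simp only [pow_succ, mul_assoc, ← sum_mul,
          sum_filter_inter_eq_neg_one_pow_card_inter hY, ite_mul, zero_mul]
    _ = _ := by rw [← sum_filter]; congr 1; ext S; simp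

theorem sum_gAlpha_filter_inter_eq_of_minimal (hmin : ∀ S ⊂ X, α S = 0) (hY : Y ⊆ X) :
    ∑ T with T ∩ X = Y, gAlpha m α T = (-1) ^ (#Y + 1) * α X := by
  rw [sum_gAlpha_filter_inter_eq hY, sum_eq_single_of_mem X (by simp [union_eq_left.2 hY]),
    inter_eq_right.2 hY]
  intro S hS hSX
  rw [hmin S (ssubset_of_subset_of_ne (mem_powerset.1 (mem_filter.1 hS).1) hSX), mul_zero]

theorem exists_gAlpha_pos_inter_eq_of_sum_pos (h : 0 < ∑ T with T ∩ X = Y, gAlpha m α T) :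
    ∃ T, 0 < gAlpha m α T ∧ T ∩ X = Y := by
  obtain ⟨T, hT, hpos⟩ := exists_lt_of_sum_lt (s := {T | T ∩ X = Y}) (f := fun _ => 0)
    (g := gAlpha m α) (by rwa [sum_const_zero])
  exact ⟨T, hpos, (mem_filter.1 hT).2⟩

theorem exists_gAlpha_pos_of_minimal {W : Finset (Fin m)} {x : Fin m} (hX : α X ≠ 0)
    (hmin : ∀ S ⊂ X, α S = 0) (hx : x ∈ X) (hW : W ⊆ X.erase x) :
    ∃ T, 0 < gAlpha m α T ∧ (T ∩ X = W ∨ T ∩ X = insert x W) := by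
  have hxW : x ∉ W := fun hxW => notMem_erase x X (hW hxW)
  have hWX : W ⊆ X := hW.trans (erase_subset x X)
  have hsum := sum_gAlpha_filter_inter_eq_of_minimal hmin hWX
  have hflip : ∑ T with T ∩ X = insert x W, gAlpha m α T =
      -∑ T with T ∩ X = W, gAlpha m α T := by
    rw [sum_gAlpha_filter_inter_eq_of_minimal hmin (insert_subset hx hWX), hsum,
      card_insert_of_notMem hxW, pow_succ]
    ring
  have hne : ∑ T with T ∩ X = W, gAlpha m α T ≠ 0 := by
    rw [hsum]
    exact mul_ne_zero (pow_ne_zero _ (by norm_num)) hX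
  rcases hne.lt_or_gt with hneg | hpos
  · obtain ⟨T, hT, hTX⟩ := exists_gAlpha_pos_inter_eq_of_sum_pos (hflip ▸ neg_pos.2 hneg)
    exact ⟨T, hT, .inr hTX⟩
  · obtain ⟨T, hT, hTX⟩ := exists_gAlpha_pos_inter_eq_of_sum_pos hpos
    exact ⟨T, hT, .inl hTX⟩

end gAlpha

theorem stmt11_general (m k : ℕ) (α : Finset (Fin m) → ℝ)
    (hαk : ∀ S : Finset (Fin m), S.card ≤ k → α S = 0)
    (hαne : α ≠ 0) :
    2 ^ k ≤ (univ.filter (fun T : Finset (Fin m) => 0 < gAlpha m α T)).card := by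
  obtain ⟨X, hX⟩ := exists_minimal_of_wellFoundedLT (fun S => α S ≠ 0) (Function.ne_iff.1 hαne)
  have hmin : ∀ S ⊂ X, α S = 0 := fun S hS => not_not.1 fun h => hX.not_prop_of_lt hS h
  have hkX : k < #X := lt_of_not_ge fun h => hX.prop (hαk X h)
  obtain ⟨x, hx⟩ : X.Nonempty := card_pos.1 (by omega)
  calc 2 ^ k ≤ 2 ^ (#X - 1) := Nat.pow_le_pow_right two_pos (by omega)
    _ ≤ _ := two_pow_card_sub_one_le_card hx fun W hW => by
      obtain ⟨T, hT, hTW⟩ := exists_gAlpha_pos_of_minimal hX.prop hmin hx hW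
      exact ⟨T, by simpa using hT, hTW⟩

theorem stmt11 (m k : ℕ) (hm : 1 ≤ m) (hk : k ≤ m - 1)
    (α : Finset (Fin m) → ℝ) (hα0 : ∀ S : Finset (Fin m), 0 ≤ α S)
    (hαk : ∀ S : Finset (Fin m), S.card ≤ k → α S = 0)
    (hαne : α ≠ 0) :
    2 ^ k ≤ (univ.filter (fun T : Finset (Fin m) => 0 < gAlpha m α T)).card :=
  stmt11_general m k α hαk hαne
end

section
/- Let m ≥ 1 and let α : 2^[m] → ℝ with α(S) ≥ 0 for all S. Suppose S* ⊆ [m] satisfies α(S*) > 0 and α(S) = 0 for every proper subset S ⊊ S*. Then for every nonempty X ⊆ S*, Σ_{T ⊆ [m]∖S*} g_α(T ∪ X) = (−1)^{|X|+1}·α(S*). -/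
/-!
Exchanging the two sums, the coefficient of `α S` is a signed count of the `T ⊆ [m] ∖ S*` with
`S ∪ T ∪ X = [m]`. Such `T` must contain `([m] ∖ S*) ∖ S` and are free on `S ∖ S*`, so the signs
cancel unless `S ⊆ S*`; the covering condition forces moreover `S* ⊆ S ∪ X`. By minimality of `S*`
only `S = S*` then contributes, with sign `(-1) ^ (|X| + 1)`.
-/

open Finset

namespace Finset

variable {ι R : Type*} [DecidableEq ι] [CommRing R]

theorem sum_powerset_ite_sdiff_subset_neg_one_pow (C S : Finset ι) :
    ∑ T ∈ C.powerset, (if C \ T ⊆ S then (-1 : R) ^ (T ∩ S).card else 0) =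
      if Disjoint C S then 1 else 0 := by
  -- expand `∏ i ∈ C, ((if i ∈ S then -1 else 1) + [i ∈ S])`, a product of `[i ∉ S]`
  have h := prod_add (fun i ↦ if i ∈ S then (-1 : R) else 1) (fun i ↦ if i ∈ S then 1 else 0) C
  have hsum (i : ι) : ((if i ∈ S then (-1 : R) else 1) + if i ∈ S then 1 else 0) =
      if i ∉ S then 1 else 0 := by split_ifs <;> simp_all
  simp only [hsum, prod_ite_mem, prod_const, prod_boole, ← subset_iff, mul_ite, mul_one,
    mul_zero] at h
  rw [← h]
  exact if_congr disjoint_left.symm rfl rfl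

variable [Fintype ι] {K S T X : Finset ι}

theorem union_union_eq_univ_iff (hT : T ⊆ Kᶜ) (hX : X ⊆ K) :
    S ∪ (T ∪ X) = univ ↔ Kᶜ \ T ⊆ S ∧ K ⊆ S ∪ X := by
  simp only [eq_univ_iff_forall, subset_iff, mem_union, mem_sdiff, mem_compl] at *
  grind

theorem card_inter_union_of_subset_compl (hT : T ⊆ Kᶜ) (hX : X ⊆ K) :
    (S ∩ (T ∪ X)).card = (T ∩ S).card + (S ∩ X).card := by
  have hTX : Disjoint (S ∩ T) (S ∩ X) :=
    (disjoint_compl_left.mono hT hX).mono inter_subset_right inter_subset_right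
  rw [inter_union_distrib_left, card_union_of_disjoint hTX, inter_comm]

theorem sum_powerset_compl_ite_union_eq_univ_neg_one_pow (hX : X ⊆ K) :
    ∑ T ∈ Kᶜ.powerset, (if S ∪ (T ∪ X) = univ then (-1 : R) ^ (S ∩ (T ∪ X)).card else 0) =
      if S ⊆ K ∧ K ⊆ S ∪ X then (-1 : R) ^ (S ∩ X).card else 0 := by
  calc _ = ∑ T ∈ Kᶜ.powerset, (if K ⊆ S ∪ X then (-1 : R) ^ (S ∩ X).card else 0) *
          if Kᶜ \ T ⊆ S then (-1 : R) ^ (T ∩ S).card else 0 := by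
        refine sum_congr rfl fun T hT ↦ ?_
        rw [mem_powerset] at hT
        simp only [union_union_eq_univ_iff hT hX, card_inter_union_of_subset_compl hT hX, pow_add]
        split_ifs <;> simp_all [mul_comm]
    _ = _ := by
        rw [← mul_sum, sum_powerset_ite_sdiff_subset_neg_one_pow]
        simp only [disjoint_compl_left_iff]
        split_ifs <;> simp_all

end Finset

theorem sum_powerset_sdiff_gAlpha_union {m : ℕ} (α : Finset (Fin m) → ℝ) {K X : Finset (Fin m)}
    (hX : X ⊆ K) :
    ∑ T ∈ (univ \ K).powerset, gAlpha m α (T ∪ X) =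
      -∑ S, if S ⊆ K ∧ K ⊆ S ∪ X then (-1 : ℝ) ^ (S ∩ X).card * α S else 0 := by
  simp only [gAlpha, sum_filter]
  rw [sum_comm, ← sum_neg_distrib, ← compl_eq_univ_sdiff]
  refine sum_congr rfl fun S _ ↦ ?_
  calc _ = -α S * ∑ T ∈ Kᶜ.powerset,
          (if S ∪ (T ∪ X) = univ then (-1 : ℝ) ^ (S ∩ (T ∪ X)).card else 0) := by
        rw [mul_sum]
        refine sum_congr rfl fun T _ ↦ ?_
        split_ifs <;> ring
    _ = _ := by
        rw [sum_powerset_compl_ite_union_eq_univ_neg_one_pow hX]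
        split_ifs <;> ring

theorem stmt12_general (m : ℕ)
    (α : Finset (Fin m) → ℝ)
    (Sstar : Finset (Fin m))
    (hmin : ∀ S : Finset (Fin m), S ⊂ Sstar → α S = 0)
    (X : Finset (Fin m)) (hXsub : X ⊆ Sstar) :
    ∑ T ∈ (univ \ Sstar).powerset, gAlpha m α (T ∪ X)
      = (-1 : ℝ) ^ (X.card + 1) * α Sstar := by
  rw [sum_powerset_sdiff_gAlpha_union α hXsub, Fintype.sum_eq_single Sstar]
  · simp [inter_eq_right.2 hXsub, pow_succ]
  · intro S hS
    by_cases hSK : S ⊆ Sstar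
    · simp [hmin S (ssubset_of_ne_of_subset hS hSK)]
    · simp [hSK]

theorem stmt12 (m : ℕ) (hm : 1 ≤ m)
    (α : Finset (Fin m) → ℝ) (hα0 : ∀ S : Finset (Fin m), 0 ≤ α S)
    (Sstar : Finset (Fin m)) (hSstar : 0 < α Sstar)
    (hmin : ∀ S : Finset (Fin m), S ⊂ Sstar → α S = 0)
    (X : Finset (Fin m)) (hX : X.Nonempty) (hXsub : X ⊆ Sstar) :
    ∑ T ∈ (univ \ Sstar).powerset, gAlpha m α (T ∪ X)
      = (-1 : ℝ) ^ (X.card + 1) * α Sstar :=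
  stmt12_general m α Sstar hmin X hXsub
end

section
/- There exist constants c > 0 and m_0 such that for every integer m ≥ m_0 that is a multiple of 8, there is a set function f : 2^[m] → ℝ with f(∅) = 0 such that at least (1 − e^{−c·m})·(2^m − 1) of its W-coefficients w_f(S) (over nonempty S ⊆ [m]) are negative, and yet there exists a coverage function f' : 2^[m] → ℝ with |{T ⊆ [m] : f(T) ≠ f'(T)}| ≤ e^{−c·m}·2^m. -/
/-!
Take `m = 8n` and the real polynomial `p` of degree `2n` with simple roots at the half-integers
`3n + 1/2, …, 5n - 1/2`, signed so that `(-1)^s p(s) > 0` at the integers `3n ≤ s ≤ 5n`.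
On set functions of the form `f(T) = (-1)^|Tᶜ| g(|Tᶜ|)` the W-transform is the binomial transform
`w_f(S) = -(-1)^|S| ∑_j C(|S|, j) g(j)`, so `g(j) = Δʲp(0)` gives, by Newton's forward-difference
formula, `w_f(S) = -(-1)^|S| p(|S|)`, which is negative on every layer `3n ≤ |S| ≤ 5n`.
Since `Δʲp = 0` for `j > 2n`, `f` vanishes unless `|T| ≥ 6n`, so it agrees with the zero coverage
function off the top layers. Both exceptional families consist of sets within `3n` of `∅` or of
`[m]`, and `(3/5)^{3n} · #{S : |S| ≤ 3n} ≤ (8/5)^{8n}` makes them an exponentially small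
fraction (about `199^n / 256^n`) of all subsets.
-/

open Finset

open Polynomial

section WTransform

variable {m : ℕ}

lemma Wcoef_eq_sum_powerset (f : Finset (Fin m) → ℝ) (S : Finset (Fin m)) :
    Wcoef m f S = ∑ A ∈ S.powerset, (-1) ^ (#S + #A + 1) * f Aᶜ := by
  have union_eq_univ_iff (T : Finset (Fin m)) : S ∪ T = univ ↔ Tᶜ ⊆ S := by
    simp [eq_univ_iff_forall, subset_iff, or_iff_not_imp_right]
  refine sum_nbij' compl compl (fun T hT => ?_) (fun A hA => ?_) (fun T _ => compl_compl T)
    (fun A _ => compl_compl A) (fun T hT => ?_)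
  · simpa [union_eq_univ_iff] using hT
  · simpa [union_eq_univ_iff] using hA
  · have hTS : Tᶜ ⊆ S := (union_eq_univ_iff T).1 (mem_filter.1 hT).2
    have hcard : #(S ∩ T) + #Tᶜ = #S := by
      rw [← card_inter_add_card_sdiff S T, sdiff_eq_inter_compl, inter_eq_right.2 hTS]
    rw [compl_compl, ← hcard, show #(S ∩ T) + #Tᶜ + #Tᶜ + 1 = #(S ∩ T) + 1 + 2 * #Tᶜ by ring,
      pow_add _ _ (2 * _), pow_mul, neg_one_sq, one_pow, mul_one]

noncomputable def newtonSetFunction (m : ℕ) (p : ℝ → ℝ) : Finset (Fin m) → ℝ :=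
  fun T => (-1) ^ #Tᶜ * (fwdDiff 1)^[#Tᶜ] p 0

lemma Wcoef_newtonSetFunction (p : ℝ → ℝ) (S : Finset (Fin m)) :
    Wcoef m (newtonSetFunction m p) S = -((-1) ^ #S * p #S) := by
  have hterm (A : Finset (Fin m)) :
      (-1 : ℝ) ^ (#S + #A + 1) * newtonSetFunction m p Aᶜ = -(-1) ^ #S * (fwdDiff 1)^[#A] p 0 := by
    rw [newtonSetFunction, compl_compl, ← mul_assoc, ← pow_add,
      show #S + #A + 1 + #A = #S + 1 + 2 * #A by ring, pow_add, pow_mul, neg_one_sq, one_pow,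
      mul_one, pow_succ]
    ring
  have newton := shift_eq_sum_fwdDiff_iter 1 p #S 0
  rw [zero_add, nsmul_one] at newton
  rw [Wcoef_eq_sum_powerset, sum_congr rfl fun A _ => hterm A, ← mul_sum,
    sum_powerset_apply_card (fun k => (fwdDiff 1)^[k] p 0), ← newton]
  ring

lemma newtonSetFunction_eq_zero {P : ℝ[X]} {T : Finset (Fin m)} (hT : P.natDegree < #Tᶜ) :
    newtonSetFunction m P.eval T = 0 := by
  simp [newtonSetFunction, fwdDiff_iter_eq_zero_of_degree_lt hT]

end WTransform

noncomputable def halfIntegerRootsPoly (a k : ℕ) : ℝ[X] :=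
  C ((-1) ^ a) * ∏ i ∈ range k, (C ((a + i : ℕ) + 1 / 2 : ℝ) - X)

lemma natDegree_halfIntegerRootsPoly_le (a k : ℕ) : (halfIntegerRootsPoly a k).natDegree ≤ k := by
  refine (natDegree_C_mul_le _ _).trans <| (natDegree_prod_le _ _).trans ?_
  refine (sum_le_card_nsmul _ _ 1 fun i _ => ?_).trans (by simp)
  compute_degree!

lemma neg_one_pow_mul_eval_halfIntegerRootsPoly_pos {a k s : ℕ} (has : a ≤ s) (hsk : s ≤ a + k) :
    0 < (-1) ^ s * (halfIntegerRootsPoly a k).eval (s : ℝ) := by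
  obtain ⟨t, rfl⟩ := Nat.exists_eq_add_of_le has
  have htk : t ≤ k := by omega
  have hfactor (i : ℕ) : ((a + i : ℕ) + 1 / 2 : ℝ) - (a + t : ℕ) = i + 1 / 2 - t := by
    push_cast; ring
  have hbelow : 0 < (-1) ^ t * ∏ i ∈ range t, ((i : ℝ) + 1 / 2 - t) := by
    nth_rw 1 [← card_range t]
    rw [← prod_neg]
    refine prod_pos fun i hi => ?_
    have : (i : ℝ) + 1 ≤ t := by exact_mod_cast mem_range.1 hi
    linarith
  have habove : 0 < ∏ i ∈ Ico t k, ((i : ℝ) + 1 / 2 - t) := by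
    refine prod_pos fun i hi => ?_
    have : (t : ℝ) ≤ i := by exact_mod_cast (mem_Ico.1 hi).1
    linarith
  have hsign : (-1 : ℝ) ^ (a + t) * (-1) ^ a = (-1) ^ t := by
    rw [pow_add, mul_right_comm, ← pow_add, ← two_mul, pow_mul, neg_one_sq, one_pow, one_mul]
  simp only [halfIntegerRootsPoly, eval_mul, eval_C, eval_prod, eval_sub, eval_X, hfactor]
  rw [← mul_assoc, hsign, ← prod_range_mul_prod_Ico _ htk, ← mul_assoc]
  exact mul_pos hbelow habove

section Counting

variable {α : Type*} [Fintype α]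

lemma card_filter_compl_eq [DecidableEq α] (P : Finset α → Prop) [DecidablePred P] :
    #{S : Finset α | P Sᶜ} = #{S : Finset α | P S} :=
  card_nbij' compl compl (fun S hS => by simpa using hS) (fun S hS => by simpa using hS)
    (fun S _ => compl_compl S) (fun S _ => compl_compl S)

lemma pow_mul_card_filter_card_le_le_one_add_pow {x : ℝ} (hx₀ : 0 ≤ x) (hx₁ : x ≤ 1) (k : ℕ) :
    x ^ k * #{S : Finset α | #S ≤ k} ≤ (x + 1) ^ Fintype.card α :=
  calc x ^ k * #{S : Finset α | #S ≤ k} = ∑ S : Finset α with #S ≤ k, x ^ k := by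
        rw [sum_const, nsmul_eq_mul, mul_comm]
    _ ≤ ∑ S : Finset α with #S ≤ k, x ^ #S :=
        sum_le_sum fun S hS => pow_le_pow_of_le_one hx₀ hx₁ (mem_filter.1 hS).2
    _ ≤ ∑ S : Finset α, x ^ #S :=
        sum_le_sum_of_subset_of_nonneg (filter_subset _ _) fun _ _ _ => by positivity
    _ = (x + 1) ^ Fintype.card α := by simpa using Fintype.sum_pow_mul_eq_add_pow α x 1

end Counting

lemma two_mul_pow_le_pow {a b : ℝ} (ha : 0 ≤ a) (hab : a ≤ b) {n₀ n : ℕ}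
    (hn₀ : 2 * a ^ n₀ ≤ b ^ n₀) (hn : n₀ ≤ n) : 2 * a ^ n ≤ b ^ n := by
  obtain ⟨j, rfl⟩ := Nat.exists_eq_add_of_le hn
  rw [pow_add, pow_add, ← mul_assoc]
  exact mul_le_mul hn₀ (pow_le_pow_left₀ ha hab j) (by positivity) (hn₀.trans' (by positivity))

lemma two_mul_card_filter_card_le_le (n : ℕ) (hn : 6 ≤ n) :
    2 * (#{S : Finset (Fin (8 * n)) | #S ≤ 3 * n} : ℝ) ≤ (8 / 9) ^ n * 2 ^ (8 * n) := by
  have hcount := pow_mul_card_filter_card_le_le_one_add_pow (α := Fin (8 * n))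
    (by norm_num : (0 : ℝ) ≤ 3 / 5) (by norm_num) (3 * n)
  rw [Fintype.card_fin] at hcount
  have hnum : 2 * ((8 / 5 : ℝ) ^ 8) ^ n ≤ ((3 / 5) ^ 3 * (8 / 9) * 2 ^ 8) ^ n :=
    two_mul_pow_le_pow (by norm_num) (by norm_num) (by norm_num) hn
  refine le_of_mul_le_mul_left ?_ (by positivity : (0 : ℝ) < (3 / 5) ^ (3 * n))
  calc (3 / 5) ^ (3 * n) * (2 * (#{S : Finset (Fin (8 * n)) | #S ≤ 3 * n} : ℝ))
      = 2 * ((3 / 5) ^ (3 * n) * #{S : Finset (Fin (8 * n)) | #S ≤ 3 * n}) := by ring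
    _ ≤ 2 * (3 / 5 + 1) ^ (8 * n) := by gcongr
    _ = 2 * ((8 / 5 : ℝ) ^ 8) ^ n := by norm_num [pow_mul]
    _ ≤ ((3 / 5) ^ 3 * (8 / 9) * 2 ^ 8) ^ n := hnum
    _ = (3 / 5) ^ (3 * n) * ((8 / 9) ^ n * 2 ^ (8 * n)) := by
        rw [mul_pow, mul_pow, pow_mul, pow_mul]; ring

section Construction

variable {m a k : ℕ}

lemma Wcoef_newtonSetFunction_halfIntegerRootsPoly_neg {S : Finset (Fin m)} (haS : a ≤ #S)
    (hSk : #S ≤ a + k) :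
    Wcoef m (newtonSetFunction m (halfIntegerRootsPoly a k).eval) S < 0 := by
  rw [Wcoef_newtonSetFunction]
  exact neg_neg_of_pos (neg_one_pow_mul_eval_halfIntegerRootsPoly_pos haS hSk)

lemma two_pow_le_card_filter_Wcoef_neg_add (hm : 2 * a + k = m) (ha : 0 < a) :
    2 ^ m ≤ #{S : Finset (Fin m) | S.Nonempty ∧
        Wcoef m (newtonSetFunction m (halfIntegerRootsPoly a k).eval) S < 0} +
      2 * #{S : Finset (Fin m) | #S ≤ a} := by
  have hbad : #{S : Finset (Fin m) | ¬(S.Nonempty ∧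
      Wcoef m (newtonSetFunction m (halfIntegerRootsPoly a k).eval) S < 0)} ≤
      #{S : Finset (Fin m) | #S ≤ a} + #{S : Finset (Fin m) | #Sᶜ ≤ a} := by
    refine (card_le_card fun S hS => ?_).trans (card_union_le _ _)
    simp only [mem_union, mem_filter, mem_univ, true_and] at hS ⊢
    by_contra! hmiddle
    have hcompl : #Sᶜ + #S = m := by rw [card_compl_add_card, Fintype.card_fin]
    exact hS ⟨card_pos.1 (by omega),
      Wcoef_newtonSetFunction_halfIntegerRootsPoly_neg (by omega) (by omega)⟩
  rw [← card_filter_compl_eq (fun S => #S ≤ a)] at hbad ⊢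
  have hall := card_filter_add_card_filter_not (s := (univ : Finset (Finset (Fin m))))
    fun S => S.Nonempty ∧ Wcoef m (newtonSetFunction m (halfIntegerRootsPoly a k).eval) S < 0
  rw [card_univ, Fintype.card_finset, Fintype.card_fin] at hall
  omega

lemma card_filter_newtonSetFunction_ne_zero_le (hka : k ≤ a) :
    #{T : Finset (Fin m) | newtonSetFunction m (halfIntegerRootsPoly a k).eval T ≠ 0} ≤
      #{T : Finset (Fin m) | #T ≤ a} := by
  rw [← card_filter_compl_eq (fun T => #T ≤ a)]
  refine card_le_card (monotone_filter_right _ fun T _ hT => ?_)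
  by_contra! hlarge
  exact hT (newtonSetFunction_eq_zero ((natDegree_halfIntegerRootsPoly_le a k).trans_lt (by omega)))

end Construction

lemma isCoverage_zero (m : ℕ) : IsCoverage m 0 :=
  ⟨Empty, inferInstance, inferInstance, fun _ => ∅, fun _ => 0, fun _ => le_rfl, by simp⟩

theorem stmt13 :
    ∃ c : ℝ, 0 < c ∧ ∃ m₀ : ℕ, ∀ m : ℕ, m₀ ≤ m → 8 ∣ m →
      ∃ f : Finset (Fin m) → ℝ, f ∅ = 0 ∧
        (1 - Real.exp (-c * m)) * (2 ^ m - 1)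
          ≤ ((univ.filter
                (fun S : Finset (Fin m) => S.Nonempty ∧ Wcoef m f S < 0)).card : ℝ) ∧
        ∃ f' : Finset (Fin m) → ℝ, IsCoverage m f' ∧
          ((univ.filter (fun T : Finset (Fin m) => f T ≠ f' T)).card : ℝ)
            ≤ Real.exp (-c * m) * 2 ^ m := by
  refine ⟨Real.log (9 / 8) / 8, by positivity, 48, fun m hm ⟨n, hmn⟩ => ?_⟩
  subst hmn
  have hε : Real.exp (-(Real.log (9 / 8) / 8) * ((8 * n : ℕ) : ℝ)) = (8 / 9) ^ n := by
    have hlog : Real.log (8 / 9) = -Real.log (9 / 8) := by rw [← Real.log_inv]; norm_num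
    rw [show -(Real.log (9 / 8) / 8) * ((8 * n : ℕ) : ℝ) = n * Real.log (8 / 9) by
      rw [hlog]; push_cast; ring, Real.exp_nat_mul, Real.exp_log (by norm_num)]
  have hε₁ : (8 / 9 : ℝ) ^ n ≤ 1 := pow_le_one₀ (by norm_num) (by norm_num)
  have hsmall := two_mul_card_filter_card_le_le n (by omega)
  have hneg := two_pow_le_card_filter_Wcoef_neg_add (m := 8 * n) (a := 3 * n) (k := 2 * n)
    (by ring) (by omega)
  have hdiff := card_filter_newtonSetFunction_ne_zero_le (m := 8 * n) (a := 3 * n) (k := 2 * n)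
    (by omega)
  rw [hε]
  refine ⟨newtonSetFunction (8 * n) (halfIntegerRootsPoly (3 * n) (2 * n)).eval,
    newtonSetFunction_eq_zero ((natDegree_halfIntegerRootsPoly_le _ _).trans_lt ?_), ?_,
    0, isCoverage_zero _, ?_⟩
  · simp only [compl_empty, card_univ, Fintype.card_fin]
    omega
  · have hnegℝ := Nat.mono_cast (α := ℝ) hneg
    push_cast at hnegℝ
    nlinarith
  · have hdiffℝ := Nat.mono_cast (α := ℝ) hdiff
    simp only [Pi.zero_apply]
    linarith
end

section
/- Let m ≥ 2 and define f : 2^[m] → ℝ by f(T) = Σ_{S nonempty, S ∩ T ≠ ∅} w(S), where w(S) = m if |S| = 1, w(S) = −1 if |S| = 2, and w(S) = 0 if |S| ≥ 3. Then exactly m(m−1)/2 of the 2^m − 1 W-coefficients of f are negative, yet every coverage function g : 2^[m] → ℝ satisfies |{T ⊆ [m] : g(T) ≠ f(T)}| ≥ 2^{m−2}. -/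
open Finset

/-- The weights `w(S) = m` for `|S| = 1`, `w(S) = −1` for `|S| = 2`, `w(S) = 0` otherwise. -/
noncomputable def wSupermod (m : ℕ) (S : Finset (Fin m)) : ℝ :=
  if S.card = 1 then (m : ℝ) else if S.card = 2 then -1 else 0

/-- The induced set function `f(T) = Σ_{S nonempty, S ∩ T ≠ ∅} w(S)`. -/
noncomputable def fSupermod (m : ℕ) (T : Finset (Fin m)) : ℝ :=
  ∑ S ∈ univ.filter (fun S : Finset (Fin m) => S.Nonempty ∧ (S ∩ T).Nonempty), wSupermod m S

/-!
Writing `f(T)` as the total `w`-weight of the sets meeting `T`, the W-transform inverts this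
representation: for nonempty `S`, the alternating sum over the `T ⊇ Sᶜ` of the indicator that `R`
meets `T` is `[R = S]`. Hence `w_f = w`, and the negative coefficients are those of the pairs.

For the lower bound fix `i ≠ j`. On every square `T, T + i, T + j, T + i + j` with
`T ⊆ [m] ∖ {i, j}`, the second difference of `f` is `-w({i, j}) = 1 > 0`, while coverage
functions are submodular; so `g` and `f` differ at a corner of each of these `2^(m-2)` disjoint
squares.
-/

lemma sum_powerset_neg_one_pow_card_real {α : Type*} [DecidableEq α] (s : Finset α) :
    ∑ X ∈ s.powerset, (-1 : ℝ) ^ #X = if s = ∅ then 1 else 0 := by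
  exact_mod_cast congrArg (Int.cast : ℤ → ℝ) (sum_powerset_neg_one_pow_card (x := s))

section MeetSum

variable {α : Type*} [Fintype α] [DecidableEq α]

def meetSum (w : Finset α → ℝ) (T : Finset α) : ℝ :=
  ∑ R, if (R ∩ T).Nonempty then w R else 0

lemma sum_filter_union_eq_univ {M : Type*} [AddCommMonoid M] (S : Finset α)
    (F : Finset α → M) :
    ∑ T ∈ univ.filter (fun T => S ∪ T = univ), F T = ∑ X ∈ S.powerset, F (Sᶜ ∪ X) := by
  refine (sum_nbij' (fun X => Sᶜ ∪ X) (fun T => S ∩ T) ?_ ?_ ?_ ?_ ?_).symm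
  · intro X _
    simp [← union_assoc]
  · intro T _
    exact mem_powerset.2 inter_subset_left
  · intro X hX
    rw [inter_union_distrib_left, inter_compl, empty_union, inter_eq_right.2 (mem_powerset.1 hX)]
  · intro T hT
    rw [mem_filter] at hT
    ext x
    have := hT.2 ▸ mem_univ x
    simp only [mem_union, mem_compl, mem_inter] at this ⊢
    tauto
  · exact fun _ _ => rfl

lemma sum_union_eq_univ_neg_one_pow_mul_meet {S : Finset α} (hS : S.Nonempty) (R : Finset α) :
    ∑ T ∈ univ.filter (fun T => S ∪ T = univ),
        (-1 : ℝ) ^ (#(S ∩ T) + 1) * (if (R ∩ T).Nonempty then 1 else 0)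
      = if R = S then 1 else 0 := by
  have hsum : ∑ X ∈ S.powerset, (-1 : ℝ) ^ #X = 0 := by
    rw [sum_powerset_neg_one_pow_card_real, if_neg hS.ne_empty]
  have hterm : ∀ X ∈ S.powerset, (-1 : ℝ) ^ (#(S ∩ (Sᶜ ∪ X)) + 1) *
      (if (R ∩ (Sᶜ ∪ X)).Nonempty then 1 else 0)
        = -(-1) ^ #X + if R ⊆ S ∧ Disjoint R X then (-1) ^ #X else 0 := by
    intro X hX
    rw [inter_union_distrib_left, inter_compl, empty_union, inter_eq_right.2 (mem_powerset.1 hX)]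
    simp only [← not_disjoint_iff_nonempty_inter, disjoint_union_right, disjoint_compl_right_iff]
    split_ifs <;> simp_all [pow_succ]
  rw [sum_filter_union_eq_univ, sum_congr rfl hterm, sum_add_distrib, sum_neg_distrib, hsum,
    neg_zero, zero_add]
  by_cases hRS : R ⊆ S
  · have hdisj : S.powerset.filter (Disjoint R) = (S \ R).powerset := by
      ext X
      simp only [mem_filter, mem_powerset, subset_sdiff, disjoint_comm]
    simp only [hRS, true_and]
    have hempty : S \ R = ∅ ↔ R = S := by
      rw [sdiff_eq_empty_iff_subset]
      exact ⟨hRS.antisymm, fun h => h ▸ subset_rfl⟩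
    rw [← sum_filter, hdisj, sum_powerset_neg_one_pow_card_real]
    simp only [hempty]
  · simp only [hRS, false_and, if_false, sum_const_zero]
    rw [if_neg (fun h => hRS h.subset)]

lemma meetSum_insert_insert_add (w : Finset α → ℝ) (i j : α) (T : Finset α) :
    meetSum w (insert i (insert j T)) + meetSum w T
        + ∑ R, (if i ∈ R ∧ j ∈ R ∧ Disjoint R T then w R else 0)
      = meetSum w (insert i T) + meetSum w (insert j T) := by
  simp only [meetSum, ← sum_add_distrib]
  refine sum_congr rfl fun R _ => ?_
  simp only [← not_disjoint_iff_nonempty_inter, disjoint_insert_right]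
  by_cases hi : i ∈ R <;> by_cases hj : j ∈ R <;> by_cases hT : Disjoint R T <;> simp [*]

end MeetSum

lemma Wcoef_meetSum {m : ℕ} (w : Finset (Fin m) → ℝ) {S : Finset (Fin m)} (hS : S.Nonempty) :
    Wcoef m (meetSum w) S = w S := by
  calc Wcoef m (meetSum w) S
      = ∑ R, w R * ∑ T ∈ univ.filter (fun T => S ∪ T = univ),
          (-1 : ℝ) ^ (#(S ∩ T) + 1) * (if (R ∩ T).Nonempty then 1 else 0) := by
        simp only [Wcoef, meetSum, mul_sum]
        rw [sum_comm]
        refine sum_congr rfl fun R _ => sum_congr rfl fun T _ => ?_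
        split_ifs <;> ring
    _ = ∑ R, w R * if R = S then 1 else 0 := by
        simp only [sum_union_eq_univ_neg_one_pow_mul_meet hS]
    _ = w S := by simp

section Supermod

variable {m : ℕ}

lemma fSupermod_eq_meetSum : fSupermod m = meetSum (wSupermod m) := by
  ext T
  rw [fSupermod, meetSum, sum_filter]
  refine sum_congr rfl fun R _ => ?_
  by_cases h : (R ∩ T).Nonempty
  · rw [if_pos ⟨h.mono inter_subset_left, h⟩, if_pos h]
  · rw [if_neg (fun hc => h hc.2), if_neg h]

lemma wSupermod_neg_iff (S : Finset (Fin m)) : wSupermod m S < 0 ↔ #S = 2 := by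
  unfold wSupermod
  split_ifs with h1 h2 <;> simp [*]

lemma sum_wSupermod_of_mem_of_mem_of_disjoint {i j : Fin m} (hij : i ≠ j) {T : Finset (Fin m)}
    (hi : i ∉ T) (hj : j ∉ T) :
    ∑ R, (if i ∈ R ∧ j ∈ R ∧ Disjoint R T then wSupermod m R else 0) = -1 := by
  have hpair : #({i, j} : Finset (Fin m)) = 2 := card_pair hij
  rw [sum_eq_single {i, j}]
  · rw [if_pos (by simp [hi, hj]), wSupermod, if_neg (by omega), if_pos hpair]
  · rintro R - hR
    split_ifs with h
    · have hsub : {i, j} ⊂ R :=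
        Finset.ssubset_iff_subset_ne.2 ⟨by simp [insert_subset_iff, h.1, h.2.1], Ne.symm hR⟩
      have := card_lt_card hsub
      rw [wSupermod, if_neg (by omega), if_neg (by omega)]
    · rfl
  · simp

lemma fSupermod_insert_insert_add {i j : Fin m} (hij : i ≠ j) {T : Finset (Fin m)}
    (hi : i ∉ T) (hj : j ∉ T) :
    fSupermod m (insert i (insert j T)) + fSupermod m T
      = fSupermod m (insert i T) + fSupermod m (insert j T) + 1 := by
  have h := meetSum_insert_insert_add (wSupermod m) i j T
  rw [sum_wSupermod_of_mem_of_mem_of_disjoint hij hi hj] at h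
  rw [fSupermod_eq_meetSum]
  linarith

end Supermod

lemma sum_union_add_sum_le_of_subset_inter {β M : Type*} [DecidableEq β] [AddCommMonoid M]
    [PartialOrder M] [IsOrderedAddMonoid M] {s t B : Finset β} {wt : β → M}
    (hwt : ∀ u, 0 ≤ wt u) (hB : B ⊆ s ∩ t) :
    ∑ u ∈ s ∪ t, wt u + ∑ u ∈ B, wt u ≤ ∑ u ∈ s, wt u + ∑ u ∈ t, wt u := by
  rw [← sum_union_inter (s₁ := s)]
  exact add_le_add_right (sum_le_sum_of_subset_of_nonneg hB fun u _ _ => hwt u) _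

lemma IsCoverage.insert_insert_add_le {m : ℕ} {g : Finset (Fin m) → ℝ} (hg : IsCoverage m g)
    (i j : Fin m) (T : Finset (Fin m)) :
    g (insert i (insert j T)) + g T ≤ g (insert i T) + g (insert j T) := by
  obtain ⟨U, _, _, A, wt, hwt, hgA⟩ := hg
  simp only [hgA, biUnion_insert]
  have hunion : A i ∪ (A j ∪ T.biUnion A) = (A i ∪ T.biUnion A) ∪ (A j ∪ T.biUnion A) := by
    ext u
    simp only [mem_union]
    tauto
  rw [hunion]
  exact sum_union_add_sum_le_of_subset_inter hwt
    (subset_inter subset_union_right subset_union_right)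

lemma two_pow_card_sub_two_le_card {α : Type*} [Fintype α] [DecidableEq α] {i j : α}
    (hij : i ≠ j) (D : Finset (Finset α))
    (hD : ∀ T, i ∉ T → j ∉ T →
      T ∈ D ∨ insert i T ∈ D ∨ insert j T ∈ D ∨ insert i (insert j T) ∈ D) :
    2 ^ (Fintype.card α - 2) ≤ #D := by
  have hcover : (univ \ {i, j}).powerset ⊆ D.image (· \ {i, j}) := by
    intro T hT
    have hi : i ∉ T := fun h => by simpa using mem_powerset.1 hT h
    have hj : j ∉ T := fun h => by simpa using mem_powerset.1 hT h
    rw [mem_image]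
    rcases hD T hi hj with h | h | h | h <;> refine ⟨_, h, ?_⟩ <;> ext x <;> grind
  calc 2 ^ (Fintype.card α - 2) = #(univ \ {i, j}).powerset := by
        rw [card_powerset, card_sdiff_of_subset (subset_univ _), card_univ, card_pair hij]
    _ ≤ #(D.image (· \ {i, j})) := card_le_card hcover
    _ ≤ #D := card_image_le

theorem stmt14 (m : ℕ) (hm : 2 ≤ m) :
    (univ.filter
        (fun S : Finset (Fin m) => S.Nonempty ∧ Wcoef m (fSupermod m) S < 0)).card
      = m * (m - 1) / 2 ∧
    ∀ g : Finset (Fin m) → ℝ, IsCoverage m g →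
      2 ^ (m - 2) ≤ (univ.filter (fun T : Finset (Fin m) => g T ≠ fSupermod m T)).card := by
  refine ⟨?_, fun g hg => ?_⟩
  · have hneg : ∀ S : Finset (Fin m), S.Nonempty ∧ Wcoef m (fSupermod m) S < 0 ↔ #S = 2 := by
      intro S
      refine ⟨fun ⟨hS, hW⟩ => ?_, fun h => ?_⟩
      · rwa [fSupermod_eq_meetSum, Wcoef_meetSum _ hS, wSupermod_neg_iff] at hW
      · have hS : S.Nonempty := card_pos.1 (by omega)
        rwa [fSupermod_eq_meetSum, Wcoef_meetSum _ hS, wSupermod_neg_iff, and_iff_right hS]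
    rw [filter_congr fun S _ => hneg S, ← powerset_univ, ← powersetCard_eq_filter,
      card_powersetCard, card_univ, Fintype.card_fin, Nat.choose_two_right]
  · obtain ⟨i, j, hij⟩ :=
      Fintype.exists_pair_of_one_lt_card (α := Fin m) (by rw [Fintype.card_fin]; omega)
    refine (two_pow_card_sub_two_le_card hij _ fun T hi hj => ?_).trans_eq'
      (by rw [Fintype.card_fin])
    by_contra! h
    simp only [mem_filter, mem_univ, true_and, ne_eq, not_not] at h
    have hf := fSupermod_insert_insert_add hij hi hj
    have hgT := hg.insert_insert_add_le i j T
    linarith [h.1, h.2.1, h.2.2.1, h.2.2.2]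
end

section
/- Let m ≥ 2 and define f : 2^[m] → ℝ by f(T) = Σ_{S nonempty, S ∩ T ≠ ∅} w(S), where w(S) = m if |S| = 1, w(S) = −1 if |S| = 2, and w(S) = 0 if |S| ≥ 3. Then f is monotone with increments at least 1 (for every R ⊆ [m] and i ∉ R, f(R ∪ {i}) − f(R) ≥ 1) and f is nonnegative (f(T) ≥ 0 for all T ⊆ [m]). -/
open Finset

/-! The `k`-subsets meeting `T` are exactly those not contained in `Tᶜ`, so there are
`C(m, k) - C(m - |T|, k)` of them. For `k = 1, 2` this turns `f(T)` into
`m |T| - (C(m, 2) - C(m - |T|, 2)) = |T| (|T| + 1) / 2`, from which both claims are immediate. -/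

section

variable {α : Type*} [Fintype α] [DecidableEq α]

theorem filter_card_eq_and_inter_nonempty (k : ℕ) (T : Finset α) :
    univ.filter (fun S : Finset α => S.card = k ∧ (S ∩ T).Nonempty) =
      powersetCard k univ \ powersetCard k Tᶜ := by
  ext S
  simp only [mem_filter, mem_univ, true_and, mem_sdiff, mem_powersetCard, subset_univ,
    subset_compl_iff_disjoint_right, disjoint_iff_inter_eq_empty, ← not_nonempty_iff_eq_empty]
  tauto

theorem card_filter_card_eq_and_inter_nonempty (k : ℕ) (T : Finset α) :
    #(univ.filter (fun S : Finset α => S.card = k ∧ (S ∩ T).Nonempty)) =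
      (Fintype.card α).choose k - (Fintype.card α - #T).choose k := by
  rw [filter_card_eq_and_inter_nonempty,
    card_sdiff_of_subset (powersetCard_mono (subset_univ _)), card_powersetCard,
    card_powersetCard, card_univ, card_compl]

end

theorem fSupermod_eq_sub_card (m : ℕ) (T : Finset (Fin m)) :
    fSupermod m T =
      m * #(univ.filter (fun S : Finset (Fin m) => S.card = 1 ∧ (S ∩ T).Nonempty)) -
        #(univ.filter (fun S : Finset (Fin m) => S.card = 2 ∧ (S ∩ T).Nonempty)) := by
  rw [fSupermod, sum_filter, card_filter, card_filter, Nat.cast_sum, Nat.cast_sum, mul_sum,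
    ← sum_sub_distrib]
  refine sum_congr rfl fun S _ => ?_
  have hS : (S ∩ T).Nonempty → S.Nonempty := fun h => h.mono inter_subset_left
  by_cases h1 : S.card = 1 <;> by_cases h2 : S.card = 2 <;> by_cases hT : (S ∩ T).Nonempty <;>
    simp_all [wSupermod]

theorem fSupermod_eq (m : ℕ) (T : Finset (Fin m)) :
    fSupermod m T = (#T : ℝ) * (#T + 1) / 2 := by
  have hT : #T ≤ m := by simpa using card_le_univ T
  rw [fSupermod_eq_sub_card, card_filter_card_eq_and_inter_nonempty,
    card_filter_card_eq_and_inter_nonempty, Fintype.card_fin,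
    Nat.cast_sub (Nat.choose_le_choose 1 (Nat.sub_le _ _)),
    Nat.cast_sub (Nat.choose_le_choose 2 (Nat.sub_le _ _)),
    Nat.choose_one_right, Nat.choose_one_right, Nat.cast_choose_two, Nat.cast_choose_two,
    Nat.cast_sub hT]
  ring

theorem stmt16_general (m : ℕ) :
    (∀ (R : Finset (Fin m)) (i : Fin m), i ∉ R →
      1 ≤ fSupermod m (R ∪ {i}) - fSupermod m R) ∧
    (∀ T : Finset (Fin m), 0 ≤ fSupermod m T) := by
  refine ⟨fun R i hi => ?_, fun T => by rw [fSupermod_eq]; positivity⟩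
  have hcard : #(R ∪ {i}) = #R + 1 := by
    rw [union_comm, ← insert_eq, card_insert_of_notMem hi]
  rw [fSupermod_eq, fSupermod_eq, hcard]
  push_cast
  nlinarith [(#R).cast_nonneg (α := ℝ)]

theorem stmt16 (m : ℕ) (hm : 2 ≤ m) :
    (∀ (R : Finset (Fin m)) (i : Fin m), i ∉ R →
      1 ≤ fSupermod m (R ∪ {i}) - fSupermod m R) ∧
    (∀ T : Finset (Fin m), 0 ≤ fSupermod m T) :=
  stmt16_general m
end

section
/- Let m ≥ 1 and 0 ≤ k < m, and let λ_0, λ_1, …, λ_m be real numbers with λ_j < 0 for every j > k. Define g : {0, 1, …, m} → ℝ by g(i) = Σ_{j=0}^{m} λ_j·C(i, j), where C(i, j) denotes the binomial coefficient. Then g has at most k + 1 zeros, i.e., |{i ∈ {0, …, m} : g(i) = 0}| ≤ k + 1. -/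
/-!
The `(k+1)`-st forward difference of `g` is `∑_{j > k} λ_j C(i, j - k - 1)`, which is negative at
every `i`. The divided difference of `g` on `k + 2` integer points is a positive combination of
these forward differences: on a block of consecutive integers it is `Δ^{k+1} g / (k+1)!`, and any
other point set can be traded, using the three-term recurrence for divided differences, for two
point sets of smaller spread with positive weights. Hence it is negative, whereas it vanishes
on any `k + 2` zeros of `g`.
-/

open Finset

lemma fwdDiff_iter_natCast_choose (n j : ℕ) :
    (fwdDiff 1)^[n] (fun x : ℕ ↦ (x.choose j : ℝ)) =
      fun x ↦ if n ≤ j then (x.choose (j - n) : ℝ) else 0 := by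
  induction n generalizing j with
  | zero => simp
  | succ n ih =>
    ext x
    rw [Function.iterate_succ_apply', ih, fwdDiff]
    rcases lt_trichotomy n j with hnj | rfl | hjn
    · obtain ⟨i, rfl⟩ := Nat.exists_eq_add_of_lt hnj
      simp [show n + i + 1 - n = i + 1 by omega, show n + i + 1 - (n + 1) = i by omega,
        Nat.choose_succ_succ', hnj.le]
    · simp
    · simp [hjn.not_ge, show ¬ n + 1 ≤ j by omega]

lemma fwdDiff_iter_sum_choose_apply (lam : ℕ → ℝ) (m n x : ℕ) :
    (fwdDiff 1)^[n] (fun i : ℕ ↦ ∑ j ∈ range (m + 1), lam j * (i.choose j : ℝ)) x =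
      ∑ j ∈ range (m + 1), lam j * if n ≤ j then (x.choose (j - n) : ℝ) else 0 := by
  have hsum : (fun i : ℕ ↦ ∑ j ∈ range (m + 1), lam j * (i.choose j : ℝ)) =
      ∑ j ∈ range (m + 1), lam j • fun i : ℕ ↦ (i.choose j : ℝ) := by
    ext i; simp
  simp [hsum, fwdDiff_iter_natCast_choose]

lemma fwdDiff_iter_sum_choose_neg {lam : ℕ → ℝ} {m n : ℕ} (hnm : n ≤ m)
    (hlam : ∀ j, n ≤ j → j ≤ m → lam j < 0) (x : ℕ) :
    (fwdDiff 1)^[n] (fun i : ℕ ↦ ∑ j ∈ range (m + 1), lam j * (i.choose j : ℝ)) x < 0 := by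
  rw [fwdDiff_iter_sum_choose_apply]
  refine sum_neg' (fun j hj ↦ ?_) ⟨n, mem_range.2 (by omega), by simpa using hlam n le_rfl hnm⟩
  split_ifs with hnj
  · exact mul_nonpos_of_nonpos_of_nonneg
      (hlam j hnj (Nat.lt_succ_iff.1 (mem_range.1 hj))).le (Nat.cast_nonneg _)
  · rw [mul_zero]

lemma erase_left_subset_Icc {s : Finset ℕ} {a b : ℕ} (h : s ⊆ Icc a b) :
    s.erase a ⊆ Icc (a + 1) b := by
  rw [Icc_add_one_left_eq_Ioc, ← Icc_erase_left]
  exact erase_subset_erase a h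

lemma erase_right_subset_Icc {s : Finset ℕ} {a b : ℕ} (h : s ⊆ Icc a (b + 1)) :
    s.erase (b + 1) ⊆ Icc a b := by
  rw [← Ico_add_one_right_eq_Icc, ← Icc_erase_right]
  exact erase_subset_erase (b + 1) h

noncomputable def divDiff (f : ℕ → ℝ) (s : Finset ℕ) : ℝ :=
  ∑ x ∈ s, f x / ∏ y ∈ s.erase x, ((x : ℝ) - y)

section divDiff

variable (f : ℕ → ℝ) {s : Finset ℕ}

lemma divDiff_erase {a : ℕ} (ha : a ∈ s) :
    divDiff f (s.erase a) = ∑ x ∈ s, f x * ((x : ℝ) - a) / ∏ y ∈ s.erase x, ((x : ℝ) - y) := by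
  rw [divDiff, ← sum_erase s (a := a) (by simp)]
  refine sum_congr rfl fun x hx ↦ ?_
  obtain ⟨hxa, -⟩ := mem_erase.1 hx
  have hxa' : (x : ℝ) - a ≠ 0 := sub_ne_zero.2 (Nat.cast_injective.ne hxa)
  rw [← mul_prod_erase (s.erase x) _ (mem_erase.2 ⟨Ne.symm hxa, ha⟩), erase_right_comm,
    mul_comm (f x), mul_div_mul_left _ _ hxa']

lemma divDiff_erase_sub_divDiff_erase {a b : ℕ} (ha : a ∈ s) (hb : b ∈ s) :
    divDiff f (s.erase a) - divDiff f (s.erase b) = ((b : ℝ) - a) * divDiff f s := by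
  rw [divDiff_erase f ha, divDiff_erase f hb, divDiff, mul_sum, ← sum_sub_distrib]
  refine sum_congr rfl fun x _ ↦ ?_
  rw [div_sub_div_same, ← mul_div_assoc]
  ring

lemma divDiff_Icc (n x : ℕ) :
    divDiff f (Icc x (x + n)) = (fwdDiff 1)^[n] f x / n.factorial := by
  induction n generalizing x with
  | zero => simp [divDiff]
  | succ n ih =>
    have key := divDiff_erase_sub_divDiff_erase f (s := Icc x (x + (n + 1)))
      (a := x) (b := x + (n + 1)) (by simp) (by simp)
    have h_left : (Icc x (x + (n + 1))).erase x = Icc (x + 1) (x + 1 + n) := by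
      ext; simp only [mem_erase, mem_Icc]; omega
    have h_right : (Icc x (x + (n + 1))).erase (x + (n + 1)) = Icc x (x + n) := by
      ext; simp only [mem_erase, mem_Icc]; omega
    rw [h_left, h_right, ih, ih] at key
    rw [Function.iterate_succ_apply', fwdDiff, Nat.factorial_succ]
    generalize divDiff f (Icc x (x + (n + 1))) = D at key ⊢
    push_cast at key ⊢
    field_simp at key
    rw [eq_div_iff (by positivity)]
    linear_combination -key

lemma mul_divDiff_eq_add {a b y : ℕ} (ha : a ∈ s) (hb : b ∈ s) (hy : y ∉ s) (hay : a ≠ y)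
    (hby : b ≠ y) :
    ((b : ℝ) - a) * divDiff f s =
      ((b : ℝ) - y) * divDiff f (insert y (s.erase a)) +
        ((y : ℝ) - a) * divDiff f (insert y (s.erase b)) := by
  have h₁ := divDiff_erase_sub_divDiff_erase f (mem_insert_self y s) (mem_insert_of_mem ha)
  have h₂ := divDiff_erase_sub_divDiff_erase f (mem_insert_self y s) (mem_insert_of_mem hb)
  rw [erase_insert hy, erase_insert_of_ne hay.symm] at h₁
  rw [erase_insert hy, erase_insert_of_ne hby.symm] at h₂
  linear_combination ((b : ℝ) - y) * h₁ - ((a : ℝ) - y) * h₂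

variable {f} {n : ℕ} (hf : ∀ x, (fwdDiff 1)^[n] f x < 0)
include hf

lemma divDiff_Icc_neg (a : ℕ) : divDiff f (Icc a (a + n)) < 0 := by
  rw [divDiff_Icc]
  exact div_neg_of_neg_of_pos (hf a) (by positivity)

lemma divDiff_neg_of_subset_Icc (d a : ℕ) (hsub : s ⊆ Icc a (a + d)) (hs : s.card = n + 1) :
    divDiff f s < 0 := by
  induction d generalizing a s with
  | zero =>
    obtain rfl : s = Icc a (a + 0) := eq_of_subset_of_card_le hsub (by simp [hs])
    obtain rfl : n = 0 := by rw [Nat.card_Icc] at hs; omega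
    exact divDiff_Icc_neg hf a
  | succ d ih =>
    by_cases hfull : s = Icc a (a + (d + 1))
    · subst hfull
      obtain rfl : n = d + 1 := by rw [Nat.card_Icc] at hs; omega
      exact divDiff_Icc_neg hf a
    have hleft : s.erase a ⊆ Icc (a + 1) (a + 1 + d) := by
      rw [Nat.add_right_comm]
      exact erase_left_subset_Icc hsub
    have hright : s.erase (a + (d + 1)) ⊆ Icc a (a + d) := erase_right_subset_Icc hsub
    by_cases ha : a ∈ s
    swap
    · exact ih (a + 1) (by rwa [erase_eq_of_notMem ha] at hleft) hs
    by_cases hb : a + (d + 1) ∈ s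
    swap
    · exact ih a (by rwa [erase_eq_of_notMem hb] at hright) hs
    obtain ⟨y, hyI, hys⟩ := exists_of_ssubset (ssubset_of_subset_of_ne hsub hfull)
    have hay : a < y := lt_of_le_of_ne (mem_Icc.1 hyI).1 (by rintro rfl; exact hys ha)
    have hyb : y < a + (d + 1) :=
      lt_of_le_of_ne (mem_Icc.1 hyI).2 (by rintro rfl; exact hys hb)
    have hcard {x : ℕ} (hx : x ∈ s) : (insert y (s.erase x)).card = n + 1 := by
      rw [card_insert_of_notMem (fun h ↦ hys (mem_of_mem_erase h)), card_erase_add_one hx, hs]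
    have h₁ : divDiff f (insert y (s.erase a)) < 0 :=
      ih (a + 1) (insert_subset (mem_Icc.2 ⟨hay, by omega⟩) hleft) (hcard ha)
    have h₂ : divDiff f (insert y (s.erase (a + (d + 1)))) < 0 :=
      ih a (insert_subset (mem_Icc.2 ⟨hay.le, by omega⟩) hright) (hcard hb)
    have hya : (0 : ℝ) < y - a := sub_pos.2 (by exact_mod_cast hay)
    have hby : (0 : ℝ) < ↑(a + (d + 1)) - y := sub_pos.2 (by exact_mod_cast hyb)
    refine neg_of_mul_neg_right ?_ (by linarith : (0 : ℝ) ≤ ↑(a + (d + 1)) - a)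
    rw [mul_divDiff_eq_add f ha hb hys hay.ne hyb.ne']
    exact add_neg (mul_neg_of_pos_of_neg hby h₁) (mul_neg_of_pos_of_neg hya h₂)

lemma divDiff_neg (hs : s.card = n + 1) : divDiff f s < 0 :=
  divDiff_neg_of_subset_Icc hf (s.sup id) 0
    (fun z hz ↦ mem_Icc.2 ⟨Nat.zero_le z, by simpa using le_sup (f := id) hz⟩) hs

theorem card_filter_eq_zero_le_of_fwdDiff_iter_neg (t : Finset ℕ) :
    (t.filter (f · = 0)).card ≤ n := by
  by_contra! h
  obtain ⟨s, hst, hs⟩ := exists_subset_card_eq (Nat.succ_le_of_lt h)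
  have hzero : divDiff f s = 0 :=
    sum_eq_zero fun x hx ↦ by rw [(mem_filter.1 (hst hx)).2, zero_div]
  exact (divDiff_neg hf hs).ne hzero

end divDiff

theorem stmt17_general (m k : ℕ) (hk : k < m) (lam : ℕ → ℝ)
    (hlam : ∀ j : ℕ, k < j → j ≤ m → lam j < 0)
    (g : ℕ → ℝ)
    (hg : ∀ i : ℕ, g i = ∑ j ∈ range (m + 1), lam j * (i.choose j : ℝ)) :
    ((range (m + 1)).filter (fun i => g i = 0)).card ≤ k + 1 := by
  obtain rfl : g = _ := funext hg
  exact card_filter_eq_zero_le_of_fwdDiff_iter_neg (fwdDiff_iter_sum_choose_neg hk hlam) _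

theorem stmt17 (m k : ℕ) (hm : 1 ≤ m) (hk : k < m) (lam : ℕ → ℝ)
    (hlam : ∀ j : ℕ, k < j → j ≤ m → lam j < 0)
    (g : ℕ → ℝ)
    (hg : ∀ i : ℕ, g i = ∑ j ∈ range (m + 1), lam j * (i.choose j : ℝ)) :
    ((range (m + 1)).filter (fun i => g i = 0)).card ≤ k + 1 :=
  stmt17_general m k hk lam hlam g hg
end

section
/- Let C > 0 and suppose that every multilinear polynomial p(x_1, …, x_m) = Σ_{S ⊆ [m]} λ_S·Π_{i ∈ S} x_i with λ_S < 0 for every S with |S| > k has at most C·k·2^m/√m zeros in {0, 1}^m. Then every coverage function g : 2^[m] → ℝ agrees with f* on at most C·k·2^m/√m subsets: |{T ⊆ [m] : g(T) = f*(T)}| ≤ C·k·2^m/√m. -/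
open Finset

/-- The multilinear polynomial `p(x) = Σ_{S ⊆ [m]} λ_S Π_{i ∈ S} x_i`. -/
noncomputable def mlPoly (m : ℕ) (lam : Finset (Fin m) → ℝ) (x : Fin m → ℝ) : ℝ :=
  ∑ S : Finset (Fin m), lam S * ∏ i ∈ S, x i

/-! A coverage function is `g(T) = Σ_{S ∩ T ≠ ∅} w(S)` with `w ≥ 0`, where `w(S)` is the weight
of the points lying in `A_i` exactly for `i ∈ S`; `f*` has the same shape with weights `w*`.
For any weights `v`, `Σ_{S ∩ T ≠ ∅} v(S) = Σ_S v(S) - Σ_{S ∩ T = ∅} v(S)` is the multilinear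
polynomial with coefficients `Σ v - v` at `∅` and `-v` elsewhere, evaluated at the indicator of
`[m] \ T`. For `v = w - w*` the coefficients at `|S| > k` are `-1 - w(S) < 0`, and `T ↦ [m] \ T`
sends the sets where `g` agrees with `f*` injectively to zeros of this polynomial. -/

section HitWeight

variable {α : Type*} [Fintype α] [DecidableEq α]

def hitWeight (v : Finset α → ℝ) (T : Finset α) : ℝ :=
  ∑ S ∈ univ.filter (fun S => ¬Disjoint S T), v S

theorem hitWeight_sub (v w : Finset α → ℝ) :
    hitWeight (v - w) = hitWeight v - hitWeight w := by
  ext T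
  simp only [hitWeight, Pi.sub_apply, sum_sub_distrib]

end HitWeight

theorem fstar_eq_hitWeight (m k : ℕ) (N : ℝ) : fstar m k N = hitWeight (wstar m k N) := by
  ext T
  refine sum_congr (filter_congr fun S _ => ?_) fun _ _ => rfl
  rw [not_disjoint_iff_nonempty_inter]
  exact ⟨And.right, fun h => ⟨h.mono inter_subset_left, h⟩⟩

theorem IsCoverage.exists_nonneg_hitWeight {m : ℕ} {g : Finset (Fin m) → ℝ}
    (hg : IsCoverage m g) : ∃ w : Finset (Fin m) → ℝ, (∀ S, 0 ≤ w S) ∧ g = hitWeight w := by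
  obtain ⟨U, _, _, A, wt, hwt, hgT⟩ := hg
  let indices : U → Finset (Fin m) := fun u => univ.filter (fun i => u ∈ A i)
  refine ⟨fun S => ∑ u ∈ univ.filter (fun u => indices u = S), wt u,
    fun S => sum_nonneg fun u _ => hwt u, funext fun T => ?_⟩
  rw [hgT, hitWeight, sum_fiberwise_eq_sum_filter]
  refine sum_congr (ext fun u => ?_) fun _ _ => rfl
  simp [indices, not_disjoint_iff, and_comm]

theorem mlPoly_eval_indicator_compl (m : ℕ) (v : Finset (Fin m) → ℝ) (T : Finset (Fin m)) :
    mlPoly m (Pi.single ∅ (∑ S, v S) - v) (fun i => if i ∉ T then 1 else 0) =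
      hitWeight v T := by
  have hprod : ∀ S : Finset (Fin m),
      ∏ i ∈ S, (if i ∉ T then 1 else 0 : ℝ) = if Disjoint S T then 1 else 0 := fun S => by
    rw [prod_boole]
    congr 1
    exact propext disjoint_left.symm
  simp only [mlPoly, Pi.sub_apply, hprod, mul_boole]
  rw [← sum_filter, sum_sub_distrib, sum_pi_single', if_pos (by simp), hitWeight,
    ← sum_filter_add_sum_filter_not univ (fun S => Disjoint S T) v, add_sub_cancel_left]

theorem stmt18_general (m k : ℕ) (N : ℝ) (C : ℝ)
    (hconj : ∀ lam : Finset (Fin m) → ℝ,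
      (∀ S : Finset (Fin m), k < S.card → lam S < 0) →
      ((univ.filter (fun x : Fin m → Bool =>
          mlPoly m lam (fun i => if x i then 1 else 0) = 0)).card : ℝ)
        ≤ C * k * 2 ^ m / Real.sqrt m) :
    ∀ g : Finset (Fin m) → ℝ, IsCoverage m g →
      ((univ.filter (fun T : Finset (Fin m) => g T = fstar m k N T)).card : ℝ)
        ≤ C * k * 2 ^ m / Real.sqrt m := by
  intro g hg
  obtain ⟨w, hw, rfl⟩ := hg.exists_nonneg_hitWeight
  set v := w - wstar m k N
  have hneg : ∀ S : Finset (Fin m), k < S.card →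
      (Pi.single ∅ (∑ S, v S) - v : Finset (Fin m) → ℝ) S < 0 := by
    intro S hS
    have hSne : S ≠ ∅ := nonempty_iff_ne_empty.mp (card_pos.mp (k.zero_le.trans_lt hS))
    simp only [Pi.sub_apply, Pi.single_apply, hSne, if_false, v, wstar, not_le.mpr hS]
    linarith [hw S]
  refine le_trans ?_ (hconj _ hneg)
  refine Nat.cast_le.mpr (card_le_card_of_injOn (fun T i => decide (i ∉ T)) (fun T hT => ?_) ?_)
  · simp only [coe_filter, mem_univ, true_and, Set.mem_ofPred_eq, decide_eq_true_eq] at hT ⊢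
    rw [mlPoly_eval_indicator_compl, hitWeight_sub, ← fstar_eq_hitWeight, Pi.sub_apply, hT, sub_self]
  · intro T _ T' _ h
    ext i
    simpa using congrFun h i

theorem stmt18 (m k : ℕ) (hm : 2 ≤ m) (hk1 : 1 ≤ k) (hk2 : k ≤ m - 1)
    (N : ℝ) (hN : (Nat.factorial (2 ^ m) : ℝ) < N)
    (C : ℝ) (hC : 0 < C)
    (hconj : ∀ lam : Finset (Fin m) → ℝ,
      (∀ S : Finset (Fin m), k < S.card → lam S < 0) →
      ((univ.filter (fun x : Fin m → Bool =>
          mlPoly m lam (fun i => if x i then 1 else 0) = 0)).card : ℝ)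
        ≤ C * k * 2 ^ m / Real.sqrt m) :
    ∀ g : Finset (Fin m) → ℝ, IsCoverage m g →
      ((univ.filter (fun T : Finset (Fin m) => g T = fstar m k N T)).card : ℝ)
        ≤ C * k * 2 ^ m / Real.sqrt m :=
  stmt18_general m k N C hconj
end
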